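/- arXiv:2510.26642 — 9 statements merged into one kernel-verified Lean document; each statement's English description precedes it below -/
import Mathlib

section
/- For integers n ≥ t ≥ 1, if F₁, F₂ ⊆ 2^[n] are cross t-intersecting families, then min{|F₁|, |F₂|} ≤ |K(n,t)|. -/
open Finset

namespace KCross


def b (n x : ℕ) : ℕ :=
  (∑ i ∈ range (x/2+1), n.choose i) + (if x % 2 = 1 then (n-1).choose (x/2) else 0)

lemma b_zero (n : ℕ) : b n 0 = 1 := by simp [b]

lemma b_one (n : ℕ) : b n 1 = 2 := by simp [b]

lemma b_two (n : ℕ) : b n 2 = 1 + n := by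
  simp [b, Finset.sum_range_succ]

lemma b_even (n r : ℕ) : b n (2*r) = ∑ i ∈ range (r+1), n.choose i := by
  have h0 : (2*r) % 2 = 0 := by omega
  have h1 : (2*r) / 2 = r := by omega
  simp [b, h0, h1]

lemma b_odd (n r : ℕ) : b n (2*r+1) = (∑ i ∈ range (r+1), n.choose i) + (n-1).choose r := by
  have h1 : (2*r+1) % 2 = 1 := by omega
  have h2 : (2*r+1) / 2 = r := by omega
  simp [b, h1, h2]

lemma b_three (n : ℕ) (hn : 2 ≤ n) : b n 3 = 2 * n := by
  rw [show (3:ℕ) = 2*1+1 from rfl, b_odd]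
  have h1 : ∑ i ∈ range (1+1), n.choose i = 1 + n := by simp [Finset.sum_range_succ]
  have h2 : (n-1).choose 1 = n - 1 := Nat.choose_one_right _
  omega

lemma sum_choose_reflect (n k : ℕ) (hk : k < n) :
    (∑ i ∈ range (k+1), n.choose i) + (∑ i ∈ range (n-k), n.choose i) = 2^n := by
  have h := Nat.sum_range_choose n
  have hsplit : range (n+1) = range (k+1) ∪ (Ico (k+1) (n+1)) := by
    simp only [range_eq_Ico]
    rw [Finset.Ico_union_Ico_eq_Ico (show (0:ℕ) ≤ k+1 by omega) (show k+1 ≤ n+1 by omega)]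
  have hdisj : Disjoint (range (k+1)) (Ico (k+1) (n+1)) := by
    simp [Finset.disjoint_left]; intro a ha; omega
  rw [hsplit, Finset.sum_union hdisj] at h
  have h2 : ∑ i ∈ Ico (k+1) (n+1), n.choose i = ∑ i ∈ range (n-k), n.choose i := by
    rw [Finset.sum_Ico_eq_sum_range]
    have e1 : ∀ i ∈ range (n+1-(k+1)), n.choose (k+1+i) = n.choose (n-k-1-i) := by
      intro i hi; simp only [mem_range] at hi
      rw [← Nat.choose_symm (show k+1+i ≤ n by omega)]
      congr 1; omega
    rw [Finset.sum_congr rfl e1, show n+1-(k+1) = n-k by omega]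
    have := Finset.sum_range_reflect (fun j => n.choose j) (n-k)
    simpa using this
  rw [h2] at h; omega

lemma sum_choose_pascal (m r : ℕ) : ∑ i ∈ range (r+1), (m+1).choose i
    = (∑ i ∈ range (r+1), m.choose i) + ∑ i ∈ range r, m.choose i := by
  induction r with
  | zero => simp
  | succ r ih =>
    have h1 : ∑ i ∈ range (r+1+1), (m+1).choose i
        = (∑ i ∈ range (r+1), (m+1).choose i) + (m+1).choose (r+1) :=
      Finset.sum_range_succ _ _
    have h2 : ∑ i ∈ range (r+1+1), m.choose i
        = (∑ i ∈ range (r+1), m.choose i) + m.choose (r+1) := Finset.sum_range_succ _ _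
    have h3 : ∑ i ∈ range (r+1), m.choose i
        = (∑ i ∈ range r, m.choose i) + m.choose r := Finset.sum_range_succ _ _
    have h4 : (m+1).choose (r+1) = m.choose r + m.choose (r+1) := Nat.choose_succ_succ m r
    omega

lemma b_pascal (n x : ℕ) (hn : 2 ≤ n) (hx : 2 ≤ x) :
    b n x = b (n-1) x + b (n-1) (x-2) := by
  obtain ⟨m, rfl⟩ : ∃ m, n = m + 1 := ⟨n-1, by omega⟩
  have hm : 1 ≤ m := by omega
  rw [show m + 1 - 1 = m from rfl]
  rcases Nat.even_or_odd x with ⟨r, hr⟩ | ⟨r, hr⟩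
  · have hr1 : 1 ≤ r := by omega
    subst hr
    rw [show r + r = 2*r by ring, show 2*r - 2 = 2*(r-1) by omega,
      b_even, b_even, b_even, sum_choose_pascal, show r-1+1 = r by omega]
  · have hr1 : 1 ≤ r := by omega
    subst hr
    rw [show 2*r+1-2 = 2*(r-1)+1 by omega, b_odd, b_odd, b_odd, sum_choose_pascal]
    have hpas : m.choose r = (m-1).choose r + (m-1).choose (r-1) := by
      obtain ⟨p, rfl⟩ : ∃ p, m = p + 1 := ⟨m-1, by omega⟩
      obtain ⟨q, rfl⟩ : ∃ q, r = q + 1 := ⟨r-1, by omega⟩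
      simp only [Nat.add_sub_cancel]
      have h := Nat.choose_succ_succ p q
      simp only [Nat.succ_eq_add_one] at h
      omega
    rw [show m+1-1 = m from rfl, hpas, show r-1+1 = r by omega]
    ring
  done

lemma b_pascal_small (n x : ℕ) (hn : 2 ≤ n) (hx : x ≤ 1) :
    b n x = b (n-1) x := by
  interval_cases x
  · rw [b_zero, b_zero]
  · rw [b_one, b_one]

lemma b_symm (n u : ℕ) (hn : 1 ≤ n) (hu : u ≤ 2*n-2) :
    b n u + b n (2*n-2-u) = 2^n := by
  rcases Nat.even_or_odd u with ⟨r, hr⟩ | ⟨r, hr⟩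
  · subst hr
    have key := sum_choose_reflect n r (by omega)
    rw [show r + r = 2*r by ring, show 2*n-2-2*r = 2*(n-1-r) by omega, b_even, b_even,
        show n-1-r+1 = n-r by omega]
    exact key
  · subst hr
    have hrn : r ≤ n - 2 := by omega
    have hn2 : 2 ≤ n := by omega
    rw [show 2*n-2-(2*r+1) = 2*(n-r-2)+1 by omega, b_odd, b_odd]
    have hsym : (n-1).choose (n-r-2) = (n-1).choose (r+1) := by
      rw [← Nat.choose_symm (show r+1 ≤ n-1 by omega)]
      congr 1; omega
    have hpas : (n-1).choose r + (n-1).choose (r+1) = n.choose (r+1) := by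
      obtain ⟨p, rfl⟩ : ∃ p, n = p + 1 := ⟨n-1, by omega⟩
      simp only [Nat.add_sub_cancel]
      have h := Nat.choose_succ_succ p r
      simp only [Nat.succ_eq_add_one] at h
      omega
    have key := sum_choose_reflect n (r+1) (by omega)
    have e2 : ∑ i ∈ range (r+1+1), n.choose i
        = (∑ i ∈ range (r+1), n.choose i) + n.choose (r+1) := Finset.sum_range_succ _ _
    have e3 : n - (r+1) = n-r-2+1 := by omega
    rw [e3] at key
    rw [hsym]
    omega

/-- saturation values -/
lemma b_top0 (n : ℕ) (hn : 1 ≤ n) : b n (2*n-2) + 1 = 2^n := by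
  have h := b_symm n 0 hn (by omega)
  rw [b_zero] at h
  simp only [Nat.sub_zero] at h
  omega

lemma b_top1 (n : ℕ) (hn : 2 ≤ n) : b n (2*n-3) + 2 = 2^n := by
  have h := b_symm n 1 (by omega) (by omega)
  rw [b_one, show 2*n-2-1 = 2*n-3 by omega] at h
  omega



def IsDownset (F : Finset (Finset ℕ)) : Prop := ∀ A ∈ F, ∀ B, B ⊆ A → B ∈ F
def Bounded (m : ℕ) (F : Finset (Finset ℕ)) : Prop := ∀ A ∈ F, A ⊆ range m
def Cross (e : ℕ) (F G : Finset (Finset ℕ)) : Prop :=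
  ∀ A ∈ F, ∀ B ∈ G, (A ∪ B).card ≤ e

lemma Cross.symm {e F G} (h : Cross e F G) : Cross e G F := by
  intro B hB A hA; rw [Finset.union_comm]; exact h A hA B hB

/-- compression of a single set : replace j by i -/
def cmp (i j : ℕ) (A : Finset ℕ) : Finset ℕ := insert i (A.erase j)

lemma cmp_card {i j : ℕ} {A : Finset ℕ} (hj : j ∈ A) : (cmp i j A).card ≤ A.card := by
  have hpos : 0 < A.card := Finset.card_pos.2 ⟨j, hj⟩
  calc (cmp i j A).card ≤ (A.erase j).card + 1 := Finset.card_insert_le _ _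
  _ = A.card := by rw [Finset.card_erase_of_mem hj]; omega

lemma cmp_card_eq {i j : ℕ} {A : Finset ℕ} (hj : j ∈ A) (hi : i ∉ A) (hij : i ≠ j) :
    (cmp i j A).card = A.card := by
  rw [cmp, Finset.card_insert_of_notMem (by simp [Finset.mem_erase]; tauto),
    Finset.card_erase_of_mem hj]
  have := Finset.card_pos.2 ⟨j, hj⟩; omega

lemma cmp_recover {i j : ℕ} {A : Finset ℕ} (hj : j ∈ A) (hi : i ∉ A) (hij : i ≠ j) :
    insert j ((cmp i j A).erase i) = A := by
  ext x
  simp only [cmp, Finset.mem_insert, Finset.mem_erase]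
  constructor
  · rintro (rfl | ⟨hxi, (rfl | ⟨hxj, hxA⟩)⟩)
    · exact hj
    · exact absurd rfl hxi
    · exact hxA
  · intro hxA
    by_cases hx : x = j
    · left; exact hx
    · right
      refine ⟨?_, Or.inr ⟨hx, hxA⟩⟩
      rintro rfl; exact hi hxA

lemma mem_cmp_i {i j : ℕ} {A : Finset ℕ} : i ∈ cmp i j A := Finset.mem_insert_self _ _

lemma not_mem_cmp_j {i j : ℕ} {A : Finset ℕ} (hij : i ≠ j) : j ∉ cmp i j A := by
  simp [cmp, Finset.mem_insert, Finset.mem_erase]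
  exact fun h => absurd h.symm hij

/-- the compression operation on a family -/
def S (i j : ℕ) (F : Finset (Finset ℕ)) : Finset (Finset ℕ) :=
  F.image (fun A => if j ∈ A ∧ i ∉ A ∧ cmp i j A ∉ F then cmp i j A else A)

lemma S_injOn (i j : ℕ) (hij : i ≠ j) (F : Finset (Finset ℕ)) :
    ∀ A ∈ F, ∀ B ∈ F,
      (if j ∈ A ∧ i ∉ A ∧ cmp i j A ∉ F then cmp i j A else A)
      = (if j ∈ B ∧ i ∉ B ∧ cmp i j B ∉ F then cmp i j B else B) → A = B := by
  intro A hA B hB h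
  by_cases ha : j ∈ A ∧ i ∉ A ∧ cmp i j A ∉ F
  · by_cases hb : j ∈ B ∧ i ∉ B ∧ cmp i j B ∉ F
    · rw [if_pos ha, if_pos hb] at h
      rw [← cmp_recover ha.1 ha.2.1 hij, ← cmp_recover hb.1 hb.2.1 hij, h]
    · rw [if_pos ha, if_neg hb] at h
      exfalso; apply ha.2.2; rw [h]; exact hB
  · by_cases hb : j ∈ B ∧ i ∉ B ∧ cmp i j B ∉ F
    · rw [if_neg ha, if_pos hb] at h
      exfalso; apply hb.2.2; rw [← h]; exact hA
    · rw [if_neg ha, if_neg hb] at h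
      exact h

lemma S_card (i j : ℕ) (hij : i ≠ j) (F : Finset (Finset ℕ)) : (S i j F).card = F.card :=
  Finset.card_image_of_injOn (S_injOn i j hij F)

lemma S_split {i j : ℕ} {F : Finset (Finset ℕ)} {C : Finset ℕ} (h : C ∈ S i j F) :
    (C ∈ F ∧ (j ∈ C → i ∉ C → cmp i j C ∈ F)) ∨
    (∃ A ∈ F, j ∈ A ∧ i ∉ A ∧ cmp i j A ∉ F ∧ C = cmp i j A) := by
  rw [S, Finset.mem_image] at h
  obtain ⟨A, hA, hAC⟩ := h
  by_cases ha : j ∈ A ∧ i ∉ A ∧ cmp i j A ∉ F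
  · right; rw [if_pos ha] at hAC; exact ⟨A, hA, ha.1, ha.2.1, ha.2.2, hAC.symm⟩
  · left; rw [if_neg ha] at hAC; subst hAC
    refine ⟨hA, fun hj hi => ?_⟩
    by_contra hc
    exact ha ⟨hj, hi, hc⟩


lemma mem_S_kept {i j : ℕ} {F : Finset (Finset ℕ)} {D : Finset ℕ}
    (hD : D ∈ F) (hP : j ∈ D → i ∉ D → cmp i j D ∈ F) : D ∈ S i j F := by
  rw [S, Finset.mem_image]
  refine ⟨D, hD, ?_⟩
  rw [if_neg]
  rintro ⟨h1, h2, h3⟩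
  exact h3 (hP h1 h2)

lemma mem_S_moved {i j : ℕ} {F : Finset (Finset ℕ)} {A : Finset ℕ}
    (hA : A ∈ F) (h1 : j ∈ A) (h2 : i ∉ A) (h3 : cmp i j A ∉ F) : cmp i j A ∈ S i j F := by
  rw [S, Finset.mem_image]
  exact ⟨A, hA, by rw [if_pos ⟨h1, h2, h3⟩]⟩

lemma cmp_mono {i j : ℕ} {D C : Finset ℕ} (h : D ⊆ C) : cmp i j D ⊆ cmp i j C :=
  Finset.insert_subset_insert _ (Finset.erase_subset_erase _ h)

lemma S_downset {i j : ℕ} (hij : i < j) {F : Finset (Finset ℕ)}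
    (hF : IsDownset F) : IsDownset (S i j F) := by
  have hijne : i ≠ j := Nat.ne_of_lt hij
  intro C hC D hD
  rcases S_split hC with ⟨hCF, hP⟩ | ⟨A, hA, hjA, hiA, hcmpA, rfl⟩
  · have hDF : D ∈ F := hF C hCF D hD
    apply mem_S_kept hDF
    intro hjD hiD
    by_cases hiC : i ∈ C
    · apply hF C hCF
      intro x hx
      rcases Finset.mem_insert.1 hx with rfl | hx
      · exact hiC
      · exact hD (Finset.mem_of_mem_erase hx)
    · exact hF _ (hP (hD hjD) hiC) _ (cmp_mono hD)
  · have hjC : j ∉ cmp i j A := not_mem_cmp_j hijne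
    have hjD : j ∉ D := fun h => hjC (hD h)
    have hCeA : (cmp i j A).erase i = A.erase j := by
      rw [cmp, Finset.erase_insert (fun h => hiA (Finset.mem_of_mem_erase h))]
    by_cases hiD : i ∈ D
    · set E := insert j (D.erase i) with hE
      have hEA : E ⊆ A := by
        intro x hx
        rcases Finset.mem_insert.1 hx with rfl | hx
        · exact hjA
        · have hxi := (Finset.mem_erase.1 hx).1
          have hx2 : x ∈ (cmp i j A).erase i :=
            Finset.mem_erase.2 ⟨hxi, hD (Finset.mem_of_mem_erase hx)⟩
          rw [hCeA] at hx2
          exact Finset.mem_of_mem_erase hx2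
      have hEF : E ∈ F := hF A hA E hEA
      have hcmpE : cmp i j E = D := by
        rw [cmp, hE, Finset.erase_insert (fun h => hjD (Finset.mem_of_mem_erase h))]
        exact Finset.insert_erase hiD
      by_cases hDF : D ∈ F
      · exact mem_S_kept hDF (fun h => absurd h hjD)
      · have hjE : j ∈ E := Finset.mem_insert_self _ _
        have hiE : i ∉ E := by
          rw [hE]
          simp only [Finset.mem_insert, Finset.mem_erase]
          push_neg
          exact ⟨hijne, fun h => absurd rfl h⟩
        have hmv := mem_S_moved hEF hjE hiE (by rw [hcmpE]; exact hDF)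
        rwa [hcmpE] at hmv
    · have hDA : D ⊆ A := by
        intro x hx
        have hxi : x ≠ i := fun h => hiD (h ▸ hx)
        have hx2 : x ∈ (cmp i j A).erase i := Finset.mem_erase.2 ⟨hxi, hD hx⟩
        rw [hCeA] at hx2
        exact Finset.mem_of_mem_erase hx2
      exact mem_S_kept (hF A hA D hDA) (fun h => absurd h hjD)

lemma S_bounded {i j n : ℕ} (hi : i < n) {F : Finset (Finset ℕ)}
    (hF : Bounded n F) : Bounded n (S i j F) := by
  intro C hC
  rcases S_split hC with ⟨hCF, _⟩ | ⟨A, hA, _, _, _, rfl⟩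
  · exact hF C hCF
  · intro x hx
    rcases Finset.mem_insert.1 hx with rfl | hx
    · exact Finset.mem_range.2 hi
    · exact hF A hA (Finset.mem_of_mem_erase hx)

lemma cmp_union {i j : ℕ} {A B : Finset ℕ} :
    cmp i j A ∪ cmp i j B ⊆ cmp i j (A ∪ B) := by
  intro x hx
  simp only [cmp, Finset.mem_union, Finset.mem_insert, Finset.mem_erase] at hx ⊢
  tauto

lemma cross_kept_moved {e i j : ℕ} {F G : Finset (Finset ℕ)} (h : Cross e F G)
    {A' B : Finset ℕ} (hA : A' ∈ F) (hP : j ∈ A' → i ∉ A' → cmp i j A' ∈ F)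
    (hB : B ∈ G) (hjB : j ∈ B) : (A' ∪ cmp i j B).card ≤ e := by
  by_cases hjA : j ∈ A'
  · by_cases hiA : i ∈ A'
    · -- A' ∪ cmp B ⊆ A' ∪ B
      refine le_trans (Finset.card_le_card ?_) (h A' hA B hB)
      intro x hx
      rcases Finset.mem_union.1 hx with hx | hx
      · exact Finset.mem_union_left _ hx
      · rcases Finset.mem_insert.1 hx with rfl | hx
        · exact Finset.mem_union_left _ hiA
        · exact Finset.mem_union_right _ (Finset.mem_of_mem_erase hx)
    · -- use cmp i j A' ∈ F
      refine le_trans (Finset.card_le_card ?_) (h _ (hP hjA hiA) B hB)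
      intro x hx
      rcases Finset.mem_union.1 hx with hx | hx
      · by_cases hxj : x = j
        · exact Finset.mem_union_right _ (hxj ▸ hjB)
        · exact Finset.mem_union_left _
            (Finset.mem_insert_of_mem (Finset.mem_erase.2 ⟨hxj, hx⟩))
      · rcases Finset.mem_insert.1 hx with rfl | hx
        · exact Finset.mem_union_left _ (Finset.mem_insert_self _ _)
        · exact Finset.mem_union_right _ (Finset.mem_of_mem_erase hx)
  · -- A' ∪ cmp B ⊆ cmp (A' ∪ B)
    have hsub : A' ∪ cmp i j B ⊆ cmp i j (A' ∪ B) := by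
      intro x hx
      simp only [cmp, Finset.mem_union, Finset.mem_insert, Finset.mem_erase] at hx ⊢
      rcases hx with hx | hx
      · right; exact ⟨fun hxj => hjA (hxj ▸ hx), Or.inl hx⟩
      · tauto
    refine le_trans (Finset.card_le_card hsub) (le_trans (cmp_card ?_) (h A' hA B hB))
    exact Finset.mem_union_right _ hjB

lemma S_cross {e i j : ℕ} (hij : i < j) {F G : Finset (Finset ℕ)}
    (h : Cross e F G) : Cross e (S i j F) (S i j G) := by
  intro A' hA' B' hB'
  rcases S_split hA' with ⟨hAF, hPA⟩ | ⟨A, hA, hjA, hiA, _, rfl⟩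
  · rcases S_split hB' with ⟨hBG, _⟩ | ⟨B, hB, hjB, hiB, _, rfl⟩
    · exact h A' hAF B' hBG
    · exact cross_kept_moved h hAF hPA hB hjB
  · rcases S_split hB' with ⟨hBG, hPB⟩ | ⟨B, hB, hjB, hiB, _, rfl⟩
    · rw [Finset.union_comm]
      exact cross_kept_moved h.symm hBG hPB hA hjA
    · refine le_trans (Finset.card_le_card cmp_union)
        (le_trans (cmp_card (Finset.mem_union_left _ hjA)) (h A hA B hB))

def Active (i j : ℕ) (F : Finset (Finset ℕ)) : Prop :=
  ∃ A ∈ F, j ∈ A ∧ i ∉ A ∧ cmp i j A ∉ F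

def Compressed (F : Finset (Finset ℕ)) : Prop :=
  ∀ ⦃A⦄, A ∈ F → ∀ ⦃j⦄, j ∈ A → ∀ ⦃i⦄, i < j → i ∉ A → cmp i j A ∈ F

def w (F : Finset (Finset ℕ)) : ℕ := ∑ A ∈ F, ∑ x ∈ A, x

lemma sigma_cmp_lt {i j : ℕ} {A : Finset ℕ} (hj : j ∈ A) (hi : i ∉ A) (hij : i < j) :
    (∑ x ∈ cmp i j A, x) < ∑ x ∈ A, x := by
  have h1 : (∑ x ∈ cmp i j A, x) = i + ∑ x ∈ A.erase j, x := by
    rw [cmp, Finset.sum_insert]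
    intro h
    exact hi (Finset.mem_of_mem_erase h)
  have h2 : (∑ x ∈ A.erase j, x) + j = ∑ x ∈ A, x := Finset.sum_erase_add _ _ hj
  omega

lemma w_S_lt {i j : ℕ} (hij : i < j) {F : Finset (Finset ℕ)} (hact : Active i j F) :
    w (S i j F) < w F := by
  have hijne : i ≠ j := Nat.ne_of_lt hij
  rw [w, w, S, Finset.sum_image (S_injOn i j hijne F)]
  obtain ⟨A0, hA0, hj0, hi0, hc0⟩ := hact
  apply Finset.sum_lt_sum
  · intro A hA
    by_cases hcond : j ∈ A ∧ i ∉ A ∧ cmp i j A ∉ F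
    · rw [if_pos hcond]
      exact (sigma_cmp_lt hcond.1 hcond.2.1 hij).le
    · rw [if_neg hcond]
  · refine ⟨A0, hA0, ?_⟩
    rw [if_pos ⟨hj0, hi0, hc0⟩]
    exact sigma_cmp_lt hj0 hi0 hij

lemma w_S_le {i j : ℕ} (hij : i < j) (F : Finset (Finset ℕ)) :
    w (S i j F) ≤ w F := by
  have hijne : i ≠ j := Nat.ne_of_lt hij
  rw [w, w, S, Finset.sum_image (S_injOn i j hijne F)]
  apply Finset.sum_le_sum
  intro A hA
  by_cases hcond : j ∈ A ∧ i ∉ A ∧ cmp i j A ∉ F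
  · rw [if_pos hcond]
    exact (sigma_cmp_lt hcond.1 hcond.2.1 hij).le
  · rw [if_neg hcond]

lemma exists_compressed_pair {n e : ℕ} :
    ∀ (N : ℕ) (F G : Finset (Finset ℕ)), w F + w G ≤ N →
    IsDownset F → IsDownset G → Bounded n F → Bounded n G → Cross e F G →
    ∃ F' G', IsDownset F' ∧ IsDownset G' ∧ Bounded n F' ∧ Bounded n G' ∧ Cross e F' G' ∧
      Compressed F' ∧ Compressed G' ∧ F'.card = F.card ∧ G'.card = G.card := by
  intro N
  induction N with
  | zero =>
    intro F G hw hdF hdG hbF hbG hc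
    refine ⟨F, G, hdF, hdG, hbF, hbG, hc, ?_, ?_, rfl, rfl⟩ <;>
    · intro A hA j hj i hij hi
      exfalso
      have hj1 : 1 ≤ j := by omega
      have : 1 ≤ ∑ x ∈ A, x := le_trans hj1 (Finset.single_le_sum (f := fun x => x) (fun i _ => Nat.zero_le i) hj)
      have : 1 ≤ w F + w G := by
        have h1 : (∑ x ∈ A, x) ≤ w F ∨ (∑ x ∈ A, x) ≤ w G := by
          first
          | exact Or.inl (Finset.single_le_sum (f := fun A => ∑ x ∈ A, x) (fun i _ => Nat.zero_le _) hA)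
          | exact Or.inr (Finset.single_le_sum (f := fun A => ∑ x ∈ A, x) (fun i _ => Nat.zero_le _) hA)
        rcases h1 with h1 | h1 <;> omega
      omega
  | succ N ih =>
    intro F G hw hdF hdG hbF hbG hc
    by_cases hact : ∃ i j, i < j ∧ (Active i j F ∨ Active i j G)
    · obtain ⟨i, j, hij, hor⟩ := hact
      have hjn : j < n := by
        rcases hor with ⟨A, hA, hj, -, -⟩ | ⟨A, hA, hj, -, -⟩
        · exact Finset.mem_range.1 (hbF A hA hj)
        · exact Finset.mem_range.1 (hbG A hA hj)
      have hin : i < n := lt_trans hij hjn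
      have hlt : w (S i j F) + w (S i j G) < w F + w G := by
        rcases hor with hor | hor
        · have := w_S_lt hij hor
          have := w_S_le hij G
          omega
        · have := w_S_lt hij hor
          have := w_S_le hij F
          omega
      obtain ⟨F', G', a1, a2, a3, a4, a5, a6, a7, a8, a9⟩ :=
        ih (S i j F) (S i j G) (by omega) (S_downset hij hdF) (S_downset hij hdG)
          (S_bounded hin hbF) (S_bounded hin hbG) (S_cross hij hc)
      exact ⟨F', G', a1, a2, a3, a4, a5, a6, a7,
        a8.trans (S_card i j (Nat.ne_of_lt hij) F),
        a9.trans (S_card i j (Nat.ne_of_lt hij) G)⟩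
    · push_neg at hact
      refine ⟨F, G, hdF, hdG, hbF, hbG, hc, ?_, ?_, rfl, rfl⟩
      · intro A hA j hj i hij hi
        by_contra hcm
        exact (hact i j hij).1 ⟨A, hA, hj, hi, hcm⟩
      · intro A hA j hj i hij hi
        by_contra hcm
        exact (hact i j hij).2 ⟨A, hA, hj, hi, hcm⟩

/-- downward closure -/
def dc (F : Finset (Finset ℕ)) : Finset (Finset ℕ) := F.biUnion Finset.powerset

lemma subset_dc (F : Finset (Finset ℕ)) : F ⊆ dc F := by
  intro A hA
  exact Finset.mem_biUnion.2 ⟨A, hA, Finset.mem_powerset_self A⟩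

lemma dc_downset (F : Finset (Finset ℕ)) : IsDownset (dc F) := by
  intro A hA B hB
  obtain ⟨C, hC, hAC⟩ := Finset.mem_biUnion.1 hA
  exact Finset.mem_biUnion.2 ⟨C, hC, Finset.mem_powerset.2 (hB.trans (Finset.mem_powerset.1 hAC))⟩

lemma dc_bounded {n : ℕ} {F : Finset (Finset ℕ)} (h : Bounded n F) : Bounded n (dc F) := by
  intro A hA
  obtain ⟨C, hC, hAC⟩ := Finset.mem_biUnion.1 hA
  exact (Finset.mem_powerset.1 hAC).trans (h C hC)

lemma dc_cross {e : ℕ} {F G : Finset (Finset ℕ)} (h : Cross e F G) : Cross e (dc F) (dc G) := by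
  intro A hA B hB
  obtain ⟨C, hC, hAC⟩ := Finset.mem_biUnion.1 hA
  obtain ⟨D, hD, hBD⟩ := Finset.mem_biUnion.1 hB
  refine le_trans (Finset.card_le_card ?_) (h C hC D hD)
  exact Finset.union_subset_union (Finset.mem_powerset.1 hAC) (Finset.mem_powerset.1 hBD)



def F0 (s : ℕ) (F : Finset (Finset ℕ)) : Finset (Finset ℕ) := F.filter (fun A => s ∉ A)
def F1 (s : ℕ) (F : Finset (Finset ℕ)) : Finset (Finset ℕ) :=
  (F.filter (fun A => s ∈ A)).image (fun A => A.erase s)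

lemma mem_F0 {s : ℕ} {F : Finset (Finset ℕ)} {A : Finset ℕ} :
    A ∈ F0 s F ↔ A ∈ F ∧ s ∉ A := Finset.mem_filter

lemma mem_F1 {s : ℕ} {F : Finset (Finset ℕ)} {A : Finset ℕ} :
    A ∈ F1 s F ↔ s ∉ A ∧ insert s A ∈ F := by
  constructor
  · rintro h
    obtain ⟨C, hC, rfl⟩ := Finset.mem_image.1 h
    rw [Finset.mem_filter] at hC
    refine ⟨Finset.notMem_erase _ _, ?_⟩
    rw [Finset.insert_erase hC.2]
    exact hC.1
  · rintro ⟨hs, hA⟩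
    refine Finset.mem_image.2 ⟨insert s A, ?_, ?_⟩
    · rw [Finset.mem_filter]
      exact ⟨hA, Finset.mem_insert_self _ _⟩
    · rw [Finset.erase_insert hs]

lemma card_decomp (s : ℕ) (F : Finset (Finset ℕ)) :
    F.card = (F0 s F).card + (F1 s F).card := by
  have h1 : (F1 s F).card = (F.filter (fun A => s ∈ A)).card := by
    apply Finset.card_image_of_injOn
    intro A hA B hB h
    rw [Finset.mem_coe, Finset.mem_filter] at hA hB
    rw [← Finset.insert_erase hA.2, ← Finset.insert_erase hB.2]
    exact congrArg (insert s) h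
  rw [h1, F0]
  have h2 := Finset.card_filter_add_card_filter_not (s := F) (p := fun A => s ∈ A)
  omega

lemma F0_downset {s : ℕ} {F : Finset (Finset ℕ)} (h : IsDownset F) : IsDownset (F0 s F) := by
  intro A hA B hB
  rw [mem_F0] at hA ⊢
  exact ⟨h A hA.1 B hB, fun hs => hA.2 (hB hs)⟩

lemma F1_downset {s : ℕ} {F : Finset (Finset ℕ)} (h : IsDownset F) : IsDownset (F1 s F) := by
  intro A hA B hB
  rw [mem_F1] at hA ⊢
  refine ⟨fun hs => hA.1 (hB hs), ?_⟩
  exact h _ hA.2 _ (Finset.insert_subset_insert _ hB)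

lemma F0_bounded {s : ℕ} {F : Finset (Finset ℕ)} (h : Bounded (s+1) F) : Bounded s (F0 s F) := by
  intro A hA
  rw [mem_F0] at hA
  intro x hx
  have := Finset.mem_range.1 (h A hA.1 hx)
  have : x ≠ s := fun he => hA.2 (he ▸ hx)
  rw [Finset.mem_range]; omega

lemma F1_bounded {s : ℕ} {F : Finset (Finset ℕ)} (h : Bounded (s+1) F) : Bounded s (F1 s F) := by
  intro A hA
  rw [mem_F1] at hA
  intro x hx
  have hx2 : x ∈ insert s A := Finset.mem_insert_of_mem hx
  have := Finset.mem_range.1 (h _ hA.2 hx2)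
  have : x ≠ s := fun he => hA.1 (he ▸ hx)
  rw [Finset.mem_range]; omega

lemma F1_sub_F0 {s : ℕ} {F : Finset (Finset ℕ)} (h : IsDownset F) : F1 s F ⊆ F0 s F := by
  intro A hA
  rw [mem_F1] at hA
  rw [mem_F0]
  exact ⟨h _ hA.2 _ (Finset.subset_insert _ _), hA.1⟩

lemma F0_compressed {s : ℕ} {F : Finset (Finset ℕ)} (h : Compressed F)
    (hb : Bounded (s+1) F) : Compressed (F0 s F) := by
  intro A hA j hj i hij hi
  rw [mem_F0] at hA ⊢
  have hj1 : j < s + 1 := Finset.mem_range.1 (hb A hA.1 hj)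
  have hjs : j ≠ s := fun he => hA.2 (he ▸ hj)
  refine ⟨h hA.1 hj hij hi, ?_⟩
  intro hs
  rcases Finset.mem_insert.1 hs with rfl | hs
  · omega
  · exact hA.2 (Finset.mem_of_mem_erase hs)

lemma F1_compressed {s : ℕ} {F : Finset (Finset ℕ)} (hcm : Compressed F)
    (hb : Bounded s (F1 s F)) : Compressed (F1 s F) := by
  intro A hA j hj i hij hi
  have hjs : j < s := Finset.mem_range.1 (hb A hA hj)
  have his : i < s := lt_trans hij hjs
  rw [mem_F1] at hA
  have hjC : j ∈ insert s A := Finset.mem_insert_of_mem hj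
  have hiC : i ∉ insert s A := by
    rw [Finset.mem_insert]
    push_neg
    exact ⟨by omega, hi⟩
  have := hcm hA.2 hjC hij hiC
  rw [mem_F1]
  constructor
  · rw [cmp, Finset.mem_insert]
    push_neg
    refine ⟨by omega, ?_⟩
    intro hs
    exact absurd ((Finset.mem_erase.1 hs).2) hA.1
  · have he : insert s (cmp i j A) = cmp i j (insert s A) := by
      rw [cmp, cmp]
      ext y
      simp only [Finset.mem_insert, Finset.mem_erase]
      constructor
      · rintro (rfl | (rfl | ⟨h1, h2⟩))
        · right; exact ⟨by omega, Or.inl rfl⟩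
        · left; rfl
        · right; exact ⟨h1, Or.inr h2⟩
      · rintro (rfl | ⟨h1, (rfl | h2)⟩)
        · right; left; rfl
        · left; rfl
        · right; right; exact ⟨h1, h2⟩
    rw [he]
    exact this


def ua (m : ℕ) (F : Finset (Finset ℕ)) : Finset (Finset ℕ) :=
  F ∪ F.biUnion (fun A => ((range m).filter (fun i => i ∉ A)).image (fun i => insert i A))

lemma mem_ua_self {m : ℕ} {F : Finset (Finset ℕ)} {A : Finset ℕ} (h : A ∈ F) : A ∈ ua m F :=
  Finset.mem_union_left _ h

lemma mem_ua_insert {m : ℕ} {F : Finset (Finset ℕ)} {A : Finset ℕ} {i : ℕ}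
    (hA : A ∈ F) (him : i < m) (hiA : i ∉ A) : insert i A ∈ ua m F := by
  apply Finset.mem_union_right
  apply Finset.mem_biUnion.2
  exact ⟨A, hA, Finset.mem_image.2 ⟨i, by simp [him, hiA], rfl⟩⟩

lemma mem_ua_elim {m : ℕ} {F : Finset (Finset ℕ)} {C : Finset ℕ} (h : C ∈ ua m F) :
    C ∈ F ∨ ∃ A ∈ F, ∃ i, i < m ∧ i ∉ A ∧ C = insert i A := by
  rcases Finset.mem_union.1 h with h | h
  · exact Or.inl h
  · right
    obtain ⟨A, hA, hC⟩ := Finset.mem_biUnion.1 h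
    obtain ⟨i, hi, rfl⟩ := Finset.mem_image.1 hC
    rw [Finset.mem_filter, Finset.mem_range] at hi
    exact ⟨A, hA, i, hi.1, hi.2, rfl⟩

lemma ua_bounded {m : ℕ} {F : Finset (Finset ℕ)} (h : Bounded m F) : Bounded m (ua m F) := by
  intro C hC
  rcases mem_ua_elim hC with hC | ⟨A, hA, i, him, _, rfl⟩
  · exact h C hC
  · exact Finset.insert_subset (Finset.mem_range.2 him) (h A hA)

lemma ua_F1_sub_F0 {s : ℕ} {F : Finset (Finset ℕ)}
    (hd : IsDownset F) (hcm : Compressed F) : ua s (F1 s F) ⊆ F0 s F := by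
  intro C hC
  rcases mem_ua_elim hC with hC | ⟨A, hA, i, his, hiA, rfl⟩
  · exact F1_sub_F0 hd hC
  · rw [mem_F1] at hA
    have hjC : s ∈ insert s A := Finset.mem_insert_self _ _
    have hiC : i ∉ insert s A := by
      rw [Finset.mem_insert]; push_neg; exact ⟨by omega, hiA⟩
    have hcmp := hcm hA.2 hjC his hiC
    have he : cmp i s (insert s A) = insert i A := by
      rw [cmp, Finset.erase_insert hA.1]
    rw [he] at hcmp
    rw [mem_F0]
    refine ⟨hcmp, ?_⟩
    rw [Finset.mem_insert]
    push_neg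
    exact ⟨by omega, hA.1⟩

lemma ua_lower (s : ℕ) {F : Finset (Finset ℕ)} (hb : Bounded (s+1) F) :
    (ua s (F0 s F)).card + (F0 s F).card ≤ (ua (s+1) F).card := by
  classical
  set X := ua s (F0 s F) with hX
  set Y := (F0 s F).image (insert s) with hY
  have hYcard : Y.card = (F0 s F).card := by
    apply Finset.card_image_of_injOn
    intro A hA B hB h
    rw [Finset.mem_coe, mem_F0] at hA hB
    have : (insert s A).erase s = (insert s B).erase s := by rw [h]
    rwa [Finset.erase_insert hA.2, Finset.erase_insert hB.2] at this
  have hXsub : X ⊆ ua (s+1) F := by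
    intro C hC
    rcases mem_ua_elim hC with hC | ⟨A, hA, i, his, hiA, rfl⟩
    · exact mem_ua_self (mem_F0.1 hC).1
    · exact mem_ua_insert (mem_F0.1 hA).1 (by omega) hiA
  have hYsub : Y ⊆ ua (s+1) F := by
    intro C hC
    obtain ⟨A, hA, rfl⟩ := Finset.mem_image.1 hC
    rw [mem_F0] at hA
    exact mem_ua_insert hA.1 (by omega) hA.2
  have hdisj : Disjoint X Y := by
    rw [Finset.disjoint_left]
    intro C hCX hCY
    obtain ⟨A, hA, rfl⟩ := Finset.mem_image.1 hCY
    rw [mem_F0] at hA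
    have hbX : Bounded s X := ua_bounded (F0_bounded hb)
    have := hbX _ hCX (Finset.mem_insert_self s A)
    rw [Finset.mem_range] at this
    omega
  calc X.card + (F0 s F).card = X.card + Y.card := by rw [hYcard]
    _ = (X ∪ Y).card := (Finset.card_union_of_disjoint hdisj).symm
    _ ≤ (ua (s+1) F).card := Finset.card_le_card (Finset.union_subset hXsub hYsub)

lemma ua_ne_lower (s : ℕ) {F : Finset (Finset ℕ)} (hd : IsDownset F) (hne : F.Nonempty) :
    s + 1 ≤ (ua s F).card := by
  classical
  obtain ⟨A, hA⟩ := hne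
  have hempty : (∅ : Finset ℕ) ∈ F := hd A hA ∅ (Finset.empty_subset _)
  set Z := insert (∅ : Finset ℕ) ((range s).image (fun i => ({i} : Finset ℕ))) with hZ
  have hZcard : Z.card = s + 1 := by
    rw [hZ, Finset.card_insert_of_notMem, Finset.card_image_of_injOn, Finset.card_range]
    · intro a _ b _ h
      exact Finset.singleton_injective h
    · intro h
      obtain ⟨i, _, hi⟩ := Finset.mem_image.1 h
      exact (Finset.singleton_ne_empty i) hi
  have hZsub : Z ⊆ ua s F := by
    intro C hC
    rcases Finset.mem_insert.1 hC with rfl | hC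
    · exact mem_ua_self hempty
    · obtain ⟨i, hi, rfl⟩ := Finset.mem_image.1 hC
      have : ({i} : Finset ℕ) = insert i ∅ := rfl
      rw [this]
      exact mem_ua_insert hempty (Finset.mem_range.1 hi) (Finset.notMem_empty i)
  calc s + 1 = Z.card := hZcard.symm
    _ ≤ (ua s F).card := Finset.card_le_card hZsub

lemma almost_full {s : ℕ} {H : Finset (Finset ℕ)} (hd : IsDownset H) (hb : Bounded s H)
    (hcard : 2^s ≤ H.card + 1) : ∀ T ⊆ range s, T ≠ range s → T ∈ H := by
  classical
  intro T hT hTne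
  by_contra hTH
  obtain ⟨x, hx⟩ : ∃ x, x ∈ range s \ T := by
    by_contra hno
    push_neg at hno
    apply hTne
    apply Finset.Subset.antisymm hT
    intro y hy
    by_contra hyT
    exact hno y (Finset.mem_sdiff.2 ⟨hy, hyT⟩)
  rw [Finset.mem_sdiff] at hx
  have hT' : insert x T ∉ H := fun h => hTH (hd _ h T (Finset.subset_insert _ _))
  have hne : insert x T ≠ T := fun h => hx.2 (h ▸ Finset.mem_insert_self x T)
  have hsub : H ⊆ (((range s).powerset.erase T).erase (insert x T)) := by
    intro A hA
    rw [Finset.mem_erase, Finset.mem_erase]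
    exact ⟨fun h => hT' (h ▸ hA), fun h => hTH (h ▸ hA), Finset.mem_powerset.2 (hb A hA)⟩
  have hmemT : T ∈ (range s).powerset := Finset.mem_powerset.2 hT
  have hmemx : insert x T ∈ (range s).powerset.erase T :=
    Finset.mem_erase.2 ⟨hne, Finset.mem_powerset.2 (Finset.insert_subset hx.1 hT)⟩
  have h1 : (((range s).powerset.erase T).erase (insert x T)).card
      = (range s).powerset.card - 2 := by
    rw [Finset.card_erase_of_mem hmemx, Finset.card_erase_of_mem hmemT]
    omega
  have h2 : (range s).powerset.card = 2^s := by
    rw [Finset.card_powerset, Finset.card_range]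
  have h3 := Finset.card_le_card hsub
  have hs1 : 1 ≤ s := by
    have := Finset.mem_range.1 hx.1; omega
  have hP2 : 2 ≤ 2^s := by
    calc 2 = 2^1 := rfl
    _ ≤ 2^s := Nat.pow_le_pow_right (by norm_num) hs1
  omega

lemma powerset_sub_ua {s : ℕ} {H : Finset (Finset ℕ)} (hs : 1 ≤ s)
    (h : ∀ T ⊆ range s, T ≠ range s → T ∈ H) : (range s).powerset ⊆ ua s H := by
  intro T hT
  rw [Finset.mem_powerset] at hT
  by_cases hTne : T = range s
  · subst hTne
    have h0 : (0:ℕ) ∈ range s := Finset.mem_range.2 (by omega)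
    set T' := (range s).erase 0 with hT'
    have hT'ne : T' ≠ range s := by
      intro he
      have : (0:ℕ) ∉ T' := Finset.notMem_erase _ _
      rw [he] at this
      exact this h0
    have hT'H : T' ∈ H := h T' (Finset.erase_subset _ _) hT'ne
    have : insert 0 T' = range s := Finset.insert_erase h0
    rw [← this]
    exact mem_ua_insert hT'H (by omega) (Finset.notMem_erase _ _)
  · exact mem_ua_self (h T hT hTne)

theorem SL : ∀ (m : ℕ), ∀ (x : ℕ) (H : Finset (Finset ℕ)), x + 4 ≤ 2*m →
    IsDownset H → Compressed H → Bounded m H → b m x < H.card →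
    b m (x+2) < (ua m H).card := by
  intro m
  induction m with
  | zero => intro x H hx _ _ _ _; omega
  | succ s ih =>
    intro x H hx hd hcm hb hcard
    have hdec : H.card = (F0 s H).card + (F1 s H).card := card_decomp s H
    have hs1 : 1 ≤ s := by omega
    have hF0big : b s x < (F0 s H).card := by
      by_cases hx2 : 2 ≤ x
      · have hpas : b (s+1) x = b s x + b s (x-2) := by
          have h := b_pascal (s+1) x (by omega) hx2
          simpa using h
        by_cases h0 : b s x < (F0 s H).card
        · exact h0
        · have h1 : b s (x-2) < (F1 s H).card := by omega
          have hrec := ih (x-2) (F1 s H) (by omega) (F1_downset hd)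
            (F1_compressed hcm (F1_bounded hb)) (F1_bounded hb) h1
          rw [show x - 2 + 2 = x by omega] at hrec
          exact lt_of_lt_of_le hrec (Finset.card_le_card (ua_F1_sub_F0 hd hcm))
      · have hpas : b (s+1) x = b s x := by
          have h := b_pascal_small (s+1) x (by omega) (by omega)
          simpa using h
        by_cases h0 : b s x < (F0 s H).card
        · exact h0
        · have h1 : 0 < (F1 s H).card := by omega
          have hne : (F1 s H).Nonempty := Finset.card_pos.1 h1
          have hlow := ua_ne_lower s (F1_downset hd) hne
          have hbx : b s x < s + 1 := by
            interval_cases x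
            · rw [b_zero]; omega
            · rw [b_one]; omega
          exact lt_of_lt_of_le (lt_of_lt_of_le hbx hlow)
            (Finset.card_le_card (ua_F1_sub_F0 hd hcm))
    have hlow := ua_lower s hb
    by_cases hxA : x + 4 ≤ 2*s
    · have hrec := ih x (F0 s H) hxA (F0_downset hd) (F0_compressed hcm hb) (F0_bounded hb) hF0big
      have hpas : b (s+1) (x+2) = b s (x+2) + b s x := by
        have h := b_pascal (s+1) (x+2) (by omega) (by omega)
        simpa [show x+2-2 = x by omega] using h
      omega
    · by_cases hxeq : x = 2*s - 2
      · have hHfull : F0 s H = (range s).powerset := by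
          apply Finset.eq_of_subset_of_card_le
          · intro A hA; exact Finset.mem_powerset.2 ((F0_bounded hb) A hA)
          · have ht := b_top0 s hs1
            rw [Finset.card_powerset, Finset.card_range]
            rw [hxeq] at hF0big
            omega
        have hcard0 : (F0 s H).card = 2^s := by
          rw [hHfull, Finset.card_powerset, Finset.card_range]
        have hX : (F0 s H).card ≤ (ua s (F0 s H)).card :=
          Finset.card_le_card (fun A hA => mem_ua_self hA)
        have ht := b_top0 (s+1) (by omega)
        have hxe2 : x + 2 = 2*(s+1) - 2 := by omega
        have hpow : 2^(s+1) = 2^s + 2^s := by ring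
        rw [hxe2]
        omega
      · have hxeq3 : x = 2*s - 3 := by omega
        have hs2 : 2 ≤ s := by omega
        have ht := b_top1 s hs2
        have h0card : 2^s ≤ (F0 s H).card + 1 := by
          rw [hxeq3] at hF0big; omega
        have hafull := almost_full (F0_downset hd) (F0_bounded hb) h0card
        have hps := powerset_sub_ua hs1 hafull
        have hXcard : 2^s ≤ (ua s (F0 s H)).card := by
          calc 2^s = (range s).powerset.card := by rw [Finset.card_powerset, Finset.card_range]
          _ ≤ _ := Finset.card_le_card hps
        have ht2 := b_top1 (s+1) (by omega)
        have hxe2 : x + 2 = 2*(s+1) - 3 := by omega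
        have hpow : 2^(s+1) = 2^s + 2^s := by ring
        rw [hxe2]
        omega

lemma push {n x : ℕ} (hx1 : 1 ≤ x) (hx2 : x + 4 ≤ 2*n) {F : Finset (Finset ℕ)}
    (hd : IsDownset F) (hcm : Compressed F) (hb : Bounded n F)
    (hcard : b n x < F.card) : b (n-1) x < (F0 (n-1) F).card := by
  obtain ⟨s, rfl⟩ : ∃ s, n = s + 1 := ⟨n-1, by omega⟩
  simp only [Nat.add_sub_cancel]
  have hdec := card_decomp s F
  have hs2 : 2 ≤ s := by omega
  by_cases hx2' : 2 ≤ x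
  · have hpas : b (s+1) x = b s x + b s (x-2) := by
      have h := b_pascal (s+1) x (by omega) hx2'
      simpa using h
    by_cases h0 : b s x < (F0 s F).card
    · exact h0
    · have h1 : b s (x-2) < (F1 s F).card := by omega
      have hrec := SL s (x-2) (F1 s F) (by omega) (F1_downset hd)
        (F1_compressed hcm (F1_bounded hb)) (F1_bounded hb) h1
      rw [show x - 2 + 2 = x by omega] at hrec
      exact lt_of_lt_of_le hrec (Finset.card_le_card (ua_F1_sub_F0 hd hcm))
  · have hx1' : x = 1 := by omega
    subst hx1'
    have hpas : b (s+1) 1 = b s 1 := by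
      have h := b_pascal_small (s+1) 1 (by omega) (by omega)
      simpa using h
    by_cases h0 : b s 1 < (F0 s F).card
    · exact h0
    · have h1 : 0 < (F1 s F).card := by omega
      have hne : (F1 s F).Nonempty := Finset.card_pos.1 h1
      have hlow := ua_ne_lower s (F1_downset hd) hne
      have hbx : b s 1 < s + 1 := by rw [b_one]; omega
      exact lt_of_lt_of_le (lt_of_lt_of_le hbx hlow)
        (Finset.card_le_card (ua_F1_sub_F0 hd hcm))

lemma card_le_size {n e : ℕ} {G : Finset (Finset ℕ)} (hb : Bounded n G)
    (hsz : ∀ A ∈ G, A.card ≤ e) : G.card ≤ b n (2*e) := by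
  classical
  have hsub : G ⊆ (range (e+1)).biUnion (fun i => (range n).powersetCard i) := by
    intro A hA
    apply Finset.mem_biUnion.2
    exact ⟨A.card, Finset.mem_range.2 (by have := hsz A hA; omega),
      Finset.mem_powersetCard.2 ⟨hb A hA, rfl⟩⟩
  calc G.card ≤ _ := Finset.card_le_card hsub
    _ ≤ ∑ i ∈ range (e+1), ((range n).powersetCard i).card := Finset.card_biUnion_le
    _ = ∑ i ∈ range (e+1), n.choose i := by
        apply Finset.sum_congr rfl
        intro i _
        rw [Finset.card_powersetCard, Finset.card_range]
    _ = b n (2*e) := (b_even n e).symm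

lemma diag {n : ℕ} {F G : Finset (Finset ℕ)} (hn : 1 ≤ n)
    (hbF : Bounded n F) (hbG : Bounded n G) (hc : Cross (n-1) F G) :
    F.card + G.card ≤ 2^n := by
  classical
  set G' := G.image (fun B => range n \ B) with hG'
  have hG'card : G'.card = G.card := by
    apply Finset.card_image_of_injOn
    intro A hA B hB h
    have hA' := hbG A (Finset.mem_coe.1 hA)
    have hB' := hbG B (Finset.mem_coe.1 hB)
    have h2 : range n \ (range n \ A) = range n \ (range n \ B) :=
      congrArg (fun t => range n \ t) h
    rwa [Finset.sdiff_sdiff_eq_self hA', Finset.sdiff_sdiff_eq_self hB'] at h2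
  have hdisj : Disjoint F G' := by
    rw [Finset.disjoint_left]
    intro A hAF hAG'
    obtain ⟨B, hB, rfl⟩ := Finset.mem_image.1 hAG'
    have hun : (range n \ B) ∪ B = range n := Finset.sdiff_union_of_subset (hbG B hB)
    have := hc _ hAF B hB
    rw [hun, Finset.card_range] at this
    omega
  have hsub : F ∪ G' ⊆ (range n).powerset := by
    intro A hA
    rcases Finset.mem_union.1 hA with hA | hA
    · exact Finset.mem_powerset.2 (hbF A hA)
    · obtain ⟨B, _, rfl⟩ := Finset.mem_image.1 hA
      exact Finset.mem_powerset.2 (Finset.sdiff_subset)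
  calc F.card + G.card = F.card + G'.card := by rw [hG'card]
    _ = (F ∪ G').card := (Finset.card_union_of_disjoint hdisj).symm
    _ ≤ (range n).powerset.card := Finset.card_le_card hsub
    _ = 2^n := by rw [Finset.card_powerset, Finset.card_range]

theorem TR : ∀ (n e : ℕ) (F G : Finset (Finset ℕ)) (x y : ℕ), e + 1 ≤ n →
    Bounded n F → Bounded n G → Cross e F G → x + y = 2*e →
    F.card ≤ b n x ∨ G.card ≤ b n y := by
  intro n
  induction n with
  | zero => intro e F G x y h; omega
  | succ m ihn =>
    intro e F G x y hen hbF hbG hc hxy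
    rcases Finset.eq_empty_or_nonempty F with rfl | hFne
    · left; simp
    rcases Finset.eq_empty_or_nonempty G with rfl | hGne
    · right; simp
    by_cases hx0 : x = 0
    · right
      obtain ⟨A0, hA0⟩ := hFne
      have hsz : ∀ B ∈ G, B.card ≤ e := by
        intro B hB
        calc B.card ≤ (A0 ∪ B).card := Finset.card_le_card Finset.subset_union_right
        _ ≤ e := hc A0 hA0 B hB
      have := card_le_size hbG hsz
      rwa [show y = 2*e by omega]
    by_cases hy0 : y = 0
    · left
      obtain ⟨B0, hB0⟩ := hGne
      have hsz : ∀ A ∈ F, A.card ≤ e := by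
        intro A hA
        calc A.card ≤ (A ∪ B0).card := Finset.card_le_card Finset.subset_union_left
        _ ≤ e := hc A hA B0 hB0
      have := card_le_size hbF hsz
      rwa [show x = 2*e by omega]
    by_cases hdiag : e = m
    · by_cases hG : G.card ≤ b (m+1) y
      · exact Or.inr hG
      · left
        push_neg at hG
        have hsum := diag (by omega : 1 ≤ m+1) hbF hbG
          (by rw [show m+1-1 = m from rfl, ← hdiag]; exact hc)
        have hyle : y ≤ 2*(m+1)-2 := by omega
        have hsymm := b_symm (m+1) y (by omega) hyle
        have hxe : x = 2*(m+1)-2-y := by omega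
        rw [hxe]
        omega
    · -- e + 2 ≤ m + 1
      have hem : e + 2 ≤ m + 1 := by omega
      by_contra hcon
      push_neg at hcon
      obtain ⟨hFbig, hGbig⟩ := hcon
      obtain ⟨F', G', hdF, hdG, hbF', hbG', hc', hcmF, hcmG, hcF, hcG⟩ :=
        exists_compressed_pair (n := m+1) (e := e) (w (dc F) + w (dc G)) (dc F) (dc G)
          le_rfl (dc_downset F) (dc_downset G) (dc_bounded hbF) (dc_bounded hbG) (dc_cross hc)
      have hF'big : b (m+1) x < F'.card := by
        have h1 : F.card ≤ F'.card := by
          rw [hcF]; exact Finset.card_le_card (subset_dc F)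
        omega
      have hG'big : b (m+1) y < G'.card := by
        have h1 : G.card ≤ G'.card := by
          rw [hcG]; exact Finset.card_le_card (subset_dc G)
        omega
      have hpF := push (show 1 ≤ x by omega) (show x + 4 ≤ 2*(m+1) by omega)
        hdF hcmF hbF' hF'big
      have hpG := push (show 1 ≤ y by omega) (show y + 4 ≤ 2*(m+1) by omega)
        hdG hcmG hbG' hG'big
      simp only [Nat.add_sub_cancel] at hpF hpG
      have hcross0 : Cross e (F0 m F') (F0 m G') := by
        intro A hA B hB
        exact hc' A (mem_F0.1 hA).1 B (mem_F0.1 hB).1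
      have hrec := ihn e (F0 m F') (F0 m G') x y (by omega)
        (F0_bounded hbF') (F0_bounded hbG') hcross0 hxy
      rcases hrec with h | h
      · omega
      · omega

lemma card_filter_card_ge (n s : ℕ) (hs : s ≤ n) :
    ((univ : Finset (Finset (Fin n))).filter (fun A => s ≤ A.card)).card
      = ∑ i ∈ range (n - s + 1), n.choose i := by
  classical
  have hpart : (univ : Finset (Finset (Fin n))).filter (fun A => s ≤ A.card)
      = (Icc s n).biUnion (fun i => (univ : Finset (Fin n)).powersetCard i) := by
    ext A
    simp only [Finset.mem_filter, Finset.mem_univ, true_and, Finset.mem_biUnion,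
      Finset.mem_Icc, Finset.mem_powersetCard]
    constructor
    · intro h
      refine ⟨A.card, ⟨h, ?_⟩, Finset.subset_univ A, rfl⟩
      calc A.card ≤ (univ : Finset (Fin n)).card := Finset.card_le_univ A
      _ = n := by rw [Finset.card_univ, Fintype.card_fin]
    · rintro ⟨i, hi, -, rfl⟩
      exact hi.1
  rw [hpart, Finset.card_biUnion]
  · have h1 : ∀ i ∈ Icc s n, ((univ : Finset (Fin n)).powersetCard i).card = n.choose i := by
      intro i _
      rw [Finset.card_powersetCard, Finset.card_univ, Fintype.card_fin]
    rw [Finset.sum_congr rfl h1]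
    rw [← Finset.Ico_add_one_right_eq_Icc, Finset.sum_Ico_eq_sum_range]
    have e1 : ∀ i ∈ range (n+1-s), n.choose (s+i) = n.choose (n-s-i) := by
      intro i hi
      rw [mem_range] at hi
      rw [← Nat.choose_symm (by omega : s + i ≤ n)]
      congr 1
      omega
    rw [Finset.sum_congr rfl e1, show n+1-s = n-s+1 by omega]
    exact Finset.sum_range_reflect (fun j => n.choose j) (n-s+1)
  · intro a _ b _ hab
    rw [Function.onFun, Finset.disjoint_left]
    intro A hA hB
    rw [Finset.mem_powersetCard] at hA hB
    apply hab
    rw [← hA.2, ← hB.2]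

lemma card_filter_card_eq_sub (n c : ℕ) (hn : 1 ≤ n) :
    ((univ : Finset (Finset (Fin n))).filter
      (fun A : Finset (Fin n) => A.card = c ∧ ∀ x ∈ A, (x:ℕ) < n-1)).card = (n-1).choose c := by
  classical
  set W := (univ : Finset (Fin n)).filter (fun (x : Fin n) => (x:ℕ) < n-1) with hW
  have hWcard : W.card = n - 1 := by
    have hsplit := Finset.card_filter_add_card_filter_not
      (s := (univ : Finset (Fin n))) (p := fun (x : Fin n) => (x:ℕ) < n-1)
    have hneg : (univ : Finset (Fin n)).filter (fun (x : Fin n) => ¬ ((x:ℕ) < n-1))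
        = {(⟨n-1, by omega⟩ : Fin n)} := by
      ext x
      simp only [Finset.mem_filter, Finset.mem_univ, true_and, Finset.mem_singleton]
      constructor
      · intro h
        have hlt := x.isLt
        apply Fin.ext
        show (x:ℕ) = n-1
        omega
      · intro h
        subst h
        show ¬ (n-1 < n-1)
        omega
    rw [hneg] at hsplit
    rw [Finset.card_singleton, Finset.card_univ, Fintype.card_fin] at hsplit
    rw [hW]
    omega
  have hpart : (univ : Finset (Finset (Fin n))).filter
      (fun A : Finset (Fin n) => A.card = c ∧ ∀ x ∈ A, (x:ℕ) < n-1) = W.powersetCard c := by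
    ext A
    simp only [Finset.mem_filter, Finset.mem_univ, true_and, Finset.mem_powersetCard, hW]
    constructor
    · rintro ⟨h1, h2⟩
      refine ⟨?_, h1⟩
      intro x hx
      simp only [Finset.mem_filter, Finset.mem_univ, true_and]
      exact h2 x hx
    · rintro ⟨h1, h2⟩
      refine ⟨h2, ?_⟩
      intro x hx
      have h3 := h1 hx
      simp only [Finset.mem_filter] at h3
      exact h3.2
  rw [hpart, Finset.card_powersetCard, hWcard]

end KCross

/-- The Katona family `K(n,t)`. -/
def katonaFamily (n t : ℕ) : Finset (Finset (Fin n)) :=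
  if (n + t) % 2 = 0 then
    Finset.univ.filter (fun A => (n + t) / 2 ≤ A.card)
  else
    Finset.univ.filter (fun A =>
      (n + t + 1) / 2 ≤ A.card ∨ (A.card = (n + t - 1) / 2 ∧ ∀ x ∈ A, (x : ℕ) < n - 1))

lemma kat_card (n t : ℕ) (ht : 1 ≤ t) (htn : t ≤ n) :
    (katonaFamily n t).card = KCross.b n (n - t) := by
  classical
  rw [katonaFamily]
  by_cases hpar : (n + t) % 2 = 0
  · rw [if_pos hpar]
    have h1 := KCross.card_filter_card_ge n ((n+t)/2) (by omega)
    rw [h1, show n - (n+t)/2 = (n-t)/2 by omega]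
    have h2 := KCross.b_even n ((n-t)/2)
    rw [show 2 * ((n-t)/2) = n - t by omega] at h2
    rw [h2]
  · rw [if_neg hpar]
    have htn' : t + 1 ≤ n := by omega
    rw [Finset.filter_or, Finset.card_union_of_disjoint]
    · have h1 := KCross.card_filter_card_ge n ((n+t+1)/2) (by omega)
      rw [h1, show n - (n+t+1)/2 = (n-t-1)/2 by omega]
      have h2 := KCross.card_filter_card_eq_sub n ((n+t-1)/2) (by omega)
      rw [h2]
      have h3 := KCross.b_odd n ((n-t-1)/2)
      rw [show 2 * ((n-t-1)/2) + 1 = n - t by omega] at h3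
      rw [h3]
      congr 1
      rw [← Nat.choose_symm (show (n+t-1)/2 ≤ n-1 by omega)]
      congr 1
      omega
    · rw [Finset.disjoint_left]
      intro A hA hB
      simp only [Finset.mem_filter] at hA hB
      obtain ⟨-, h1⟩ := hA
      obtain ⟨-, h2, -⟩ := hB
      omega

theorem stmt4 (n t : ℕ) (ht : 1 ≤ t) (htn : t ≤ n)
    (F₁ F₂ : Finset (Finset (Fin n)))
    (hcross : ∀ A ∈ F₁, ∀ B ∈ F₂, t ≤ (A ∩ B).card) :
    min F₁.card F₂.card ≤ (katonaFamily n t).card := by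
  classical
  set Φ : Finset (Fin n) → Finset ℕ :=
    fun A => (Finset.univ \ A).image (fun x : Fin n => (x:ℕ)) with hΦ
  have hΦinj : Function.Injective Φ := by
    intro A B h
    have h2 : (Finset.univ \ A) = (Finset.univ \ B) :=
      Finset.image_injective Fin.val_injective h
    have h3 := congrArg (fun s => Finset.univ \ s) h2
    simpa [Finset.sdiff_sdiff_eq_self (Finset.subset_univ _)] using h3
  set F := F₁.image Φ with hF
  set G := F₂.image Φ with hG
  have hFcard : F.card = F₁.card := Finset.card_image_of_injective _ hΦinj
  have hGcard : G.card = F₂.card := Finset.card_image_of_injective _ hΦinj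
  have hbF : KCross.Bounded n F := by
    intro A' hA'
    obtain ⟨A, -, rfl⟩ := Finset.mem_image.1 hA'
    intro y hy
    obtain ⟨x, -, rfl⟩ := Finset.mem_image.1 hy
    exact Finset.mem_range.2 x.isLt
  have hbG : KCross.Bounded n G := by
    intro A' hA'
    obtain ⟨A, -, rfl⟩ := Finset.mem_image.1 hA'
    intro y hy
    obtain ⟨x, -, rfl⟩ := Finset.mem_image.1 hy
    exact Finset.mem_range.2 x.isLt
  have hcr : KCross.Cross (n - t) F G := by
    intro A' hA' B' hB'
    obtain ⟨A, hA, rfl⟩ := Finset.mem_image.1 hA'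
    obtain ⟨B, hB, rfl⟩ := Finset.mem_image.1 hB'
    have hu : Φ A ∪ Φ B = (Finset.univ \ (A ∩ B)).image (fun x : Fin n => (x:ℕ)) := by
      rw [hΦ]
      rw [← Finset.image_union]
      congr 1
      ext x
      simp only [Finset.mem_union, Finset.mem_sdiff, Finset.mem_univ, true_and,
        Finset.mem_inter]
      tauto
    rw [hu, Finset.card_image_of_injective _ Fin.val_injective,
      Finset.card_sdiff_of_subset (Finset.subset_univ _)]
    rw [Finset.card_univ, Fintype.card_fin]
    exact Nat.sub_le_sub_left (hcross A hA B hB) n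
  have hTR := KCross.TR n (n-t) F G (n-t) (n-t) (by omega) hbF hbG hcr (by ring)
  have hkat := kat_card n t ht htn
  rcases hTR with h | h
  · calc min F₁.card F₂.card ≤ F₁.card := min_le_left _ _
    _ = F.card := hFcard.symm
    _ ≤ KCross.b n (n-t) := h
    _ = (katonaFamily n t).card := hkat.symm
  · calc min F₁.card F₂.card ≤ F₂.card := min_le_right _ _
    _ = G.card := hGcard.symm
    _ ≤ KCross.b n (n-t) := h
    _ = (katonaFamily n t).card := hkat.symm
end

section
/- Let F ⊆ 2^[n] and let A, B ⊆ [n] be disjoint sets with |B| > |A|, and let p ∈ [1/2, 1). Then μ_p(S_{A,B}(F)) ≥ μ_p(F). Moreover, equality holds if and only if p = 1/2, or p > 1/2 and S_{A,B}(F) = F. -/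
/-- The p-biased measure of a family of subsets of `Fin n`. -/
def biasedMeasure (n : ℕ) (p : ℝ) (F : Finset (Finset (Fin n))) : ℝ :=
  ∑ A ∈ F, p ^ A.card * (1 - p) ^ (n - A.card)

/-- The `(A,B)`-shift of a family. -/
def shiftFam {n : ℕ} (A B : Finset (Fin n)) (F : Finset (Finset (Fin n))) :
    Finset (Finset (Fin n)) :=
  F.image (fun F0 =>
    if A ⊆ F0 ∧ Disjoint B F0 ∧ (F0 \ A) ∪ B ∉ F then (F0 \ A) ∪ B else F0)

theorem stmt5 (n : ℕ) (A B : Finset (Fin n)) (hAB : Disjoint A B)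
    (hcard : A.card < B.card) (p : ℝ) (hp : p ∈ Set.Ico (1 / 2 : ℝ) 1)
    (F : Finset (Finset (Fin n))) :
    biasedMeasure n p F ≤ biasedMeasure n p (shiftFam A B F) ∧
      (biasedMeasure n p (shiftFam A B F) = biasedMeasure n p F ↔
        p = 1 / 2 ∨ (1 / 2 < p ∧ shiftFam A B F = F)) := by
  obtain ⟨hp1, hp2⟩ := hp
  have hp0 : (0:ℝ) < p := by linarith
  have h1p : (0:ℝ) < 1 - p := by linarith
  have hle : 1 - p ≤ p := by linarith
  have hcardle : ∀ S : Finset (Fin n), S.card ≤ n := fun S => by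
    simpa using Finset.card_le_univ S
  set σ : Finset (Fin n) → Finset (Fin n) := fun F0 =>
    if A ⊆ F0 ∧ Disjoint B F0 ∧ (F0 \ A) ∪ B ∉ F then (F0 \ A) ∪ B else F0 with hσ
  have hshift : shiftFam A B F = F.image σ := rfl
  -- recovering a set from its shift
  have hrec : ∀ x : Finset (Fin n), A ⊆ x → Disjoint B x →
      (((x \ A) ∪ B) \ B) ∪ A = x := by
    intro x hA hB
    have hd : Disjoint (x \ A) B := (hB.mono_right Finset.sdiff_subset).symm
    rw [Finset.union_sdiff_cancel_right hd, Finset.sdiff_union_of_subset hA]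
  have hinj : ∀ x ∈ F, ∀ y ∈ F, σ x = σ y → x = y := by
    intro x hx y hy hxy
    by_cases hcx : A ⊆ x ∧ Disjoint B x ∧ (x \ A) ∪ B ∉ F
    · by_cases hcy : A ⊆ y ∧ Disjoint B y ∧ (y \ A) ∪ B ∉ F
      · simp only [hσ, if_pos hcx, if_pos hcy] at hxy
        have h1 := hrec x hcx.1 hcx.2.1
        rw [hxy, hrec y hcy.1 hcy.2.1] at h1
        exact h1.symm
      · simp only [hσ, if_pos hcx, if_neg hcy] at hxy
        exact (hcx.2.2 (by rw [hxy]; exact hy)).elim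
    · by_cases hcy : A ⊆ y ∧ Disjoint B y ∧ (y \ A) ∪ B ∉ F
      · simp only [hσ, if_neg hcx, if_pos hcy] at hxy
        exact (hcy.2.2 (by rw [← hxy]; exact hx)).elim
      · simpa only [hσ, if_neg hcx, if_neg hcy] using hxy
  have hcardmove : ∀ x : Finset (Fin n), A ⊆ x → Disjoint B x →
      ((x \ A) ∪ B).card = x.card - A.card + B.card := by
    intro x hA hB
    rw [Finset.card_union_of_disjoint ((hB.mono_right Finset.sdiff_subset).symm),
        Finset.card_sdiff_of_subset hA]
  -- key monotonicity of the weight in the cardinality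
  have key : ∀ k m : ℕ, k ≤ m → m ≤ n →
      p ^ k * (1-p) ^ (n-k) ≤ p ^ m * (1-p) ^ (n-m) ∧
      (k < m → 1/2 < p → p ^ k * (1-p) ^ (n-k) < p ^ m * (1-p) ^ (n-m)) := by
    intro k m hkm hmn
    have e1 : p ^ k * (1-p) ^ (n-k) = (p^k * (1-p)^(n-m)) * (1-p)^(m-k) := by
      rw [show n - k = (m - k) + (n - m) by omega, pow_add]; ring
    have e2 : (p^k * (1-p)^(n-m)) * p^(m-k) = p ^ m * (1-p) ^ (n-m) := by
      rw [mul_right_comm, ← pow_add, Nat.add_sub_cancel' hkm]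
    have hc : 0 < p^k * (1-p)^(n-m) := by positivity
    rw [e1, ← e2]
    constructor
    · exact mul_le_mul_of_nonneg_left (pow_le_pow_left₀ h1p.le hle _) hc.le
    · intro hk hph
      exact mul_lt_mul_of_pos_left
        (pow_lt_pow_left₀ (by linarith) h1p.le (by omega)) hc
  -- termwise comparison
  have hterm : ∀ x ∈ F, p ^ x.card * (1-p) ^ (n - x.card) ≤
      p ^ (σ x).card * (1-p) ^ (n - (σ x).card) := by
    intro x _
    by_cases hc : A ⊆ x ∧ Disjoint B x ∧ (x \ A) ∪ B ∉ F
    · have hm : (σ x).card = x.card - A.card + B.card := by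
        simp only [hσ, if_pos hc]; exact hcardmove x hc.1 hc.2.1
      have hAx : A.card ≤ x.card := Finset.card_le_card hc.1
      exact (key x.card (σ x).card (by omega) (hcardle _)).1
    · simp only [hσ, if_neg hc]; exact le_refl _
  have htermlt : 1/2 < p → ∀ x ∈ F,
      (A ⊆ x ∧ Disjoint B x ∧ (x \ A) ∪ B ∉ F) →
      p ^ x.card * (1-p) ^ (n - x.card) <
      p ^ (σ x).card * (1-p) ^ (n - (σ x).card) := by
    intro hph x _ hc
    have hm : (σ x).card = x.card - A.card + B.card := by
      simp only [hσ, if_pos hc]; exact hcardmove x hc.1 hc.2.1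
    have hAx : A.card ≤ x.card := Finset.card_le_card hc.1
    exact (key x.card (σ x).card (by omega) (hcardle _)).2 (by omega) hph
  rw [hshift, biasedMeasure, biasedMeasure, Finset.sum_image hinj]
  constructor
  · exact Finset.sum_le_sum hterm
  · rw [eq_comm, Finset.sum_eq_sum_iff_of_le hterm]
    constructor
    · intro h
      rcases eq_or_lt_of_le hp1 with hhalf | hhalf
      · exact Or.inl hhalf.symm
      · refine Or.inr ⟨hhalf, ?_⟩
        have hfix : ∀ x ∈ F, σ x = x := by
          intro x hx
          by_cases hc : A ⊆ x ∧ Disjoint B x ∧ (x \ A) ∪ B ∉ F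
          · exact absurd (h x hx) (ne_of_lt (htermlt hhalf x hx hc))
          · simp only [hσ, if_neg hc]
        calc F.image σ = F.image id := Finset.image_congr hfix
          _ = F := Finset.image_id
    · rintro (hhalf | ⟨hhalf, hFeq⟩)
      · intro x _
        have hpp : (1:ℝ) - p = p := by rw [hhalf]; norm_num
        rw [hpp, ← pow_add, ← pow_add,
          Nat.add_sub_cancel' (hcardle x), Nat.add_sub_cancel' (hcardle (σ x))]
      · intro x hx
        by_cases hc : A ⊆ x ∧ Disjoint B x ∧ (x \ A) ∪ B ∉ F
        · exfalso
          apply hc.2.2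
          have : σ x ∈ F := by
            rw [← hFeq]; exact Finset.mem_image_of_mem σ hx
          simpa only [hσ, if_pos hc] using this
        · simp only [hσ, if_neg hc]
  done
end

section
/- Let F₁, F₂ ⊆ 2^[n] be cross t-intersecting families, and let A, B ⊆ [n] be disjoint with |A| = k and |B| = k+1. If F₁ and F₂ are (i, i+1)-stable for all 0 ≤ i < k, then S_{A,B}(F₁) and S_{A,B}(F₂) are cross t-intersecting. -/
/-- A family is `(i, i+1)`-stable if it is fixed by every `(A,B)`-shift with
`|A| = i`, `|B| = i+1`, `A` and `B` disjoint. -/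
def IsStable {n : ℕ} (i : ℕ) (F : Finset (Finset (Fin n))) : Prop :=
  ∀ A B : Finset (Fin n), Disjoint A B → A.card = i → B.card = i + 1 →
    shiftFam A B F = F

lemma stable_mem {n i : ℕ} {F : Finset (Finset (Fin n))} (h : IsStable i F)
    {G X Y : Finset (Fin n)} (hG : G ∈ F) (hXY : Disjoint X Y) (hX : X.card = i)
    (hY : Y.card = i + 1) (hXG : X ⊆ G) (hYG : Disjoint Y G) : (G \ X) ∪ Y ∈ F := by
  by_cases hmem : (G \ X) ∪ Y ∈ F
  · exact hmem
  · have hs := h X Y hXY hX hY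
    rw [← hs, shiftFam, Finset.mem_image]
    exact ⟨G, hG, by simp [hXG, hYG, hmem]⟩

lemma inter_shift_card {n : ℕ} (F A B S : Finset (Fin n)) (hBF : Disjoint B F) :
    (((F \ A) ∪ B) ∩ S).card = ((F ∩ S) \ A).card + (B ∩ S).card := by
  have hset : ((F \ A) ∪ B) ∩ S = ((F ∩ S) \ A) ∪ (B ∩ S) := by
    ext x
    simp only [Finset.mem_inter, Finset.mem_union, Finset.mem_sdiff]
    tauto
  rw [hset, Finset.card_union_of_disjoint]
  exact Finset.disjoint_left.2 fun x hx hx' =>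
    (Finset.disjoint_left.1 hBF) (Finset.mem_inter.1 hx').1
      ((Finset.mem_inter.1 (Finset.mem_sdiff.1 hx).1).1)

/-- The key asymmetric case: `F` gets shifted, `G` stays fixed. -/
lemma key_lemma {n t k : ℕ} {F₁ F₂ : Finset (Finset (Fin n))}
    (hcross : ∀ F ∈ F₁, ∀ G ∈ F₂, t ≤ (F ∩ G).card)
    {A B : Finset (Fin n)} (hAB : Disjoint A B) (hA : A.card = k) (hB : B.card = k + 1)
    (hstab₂ : ∀ i < k, IsStable i F₂)
    {F G : Finset (Fin n)} (hF : F ∈ F₁) (hAF : A ⊆ F) (hBF : Disjoint B F)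
    (hG : G ∈ F₂) (hGfix : A ⊆ G → Disjoint B G → (G \ A) ∪ B ∈ F₂) :
    t ≤ (((F \ A) ∪ B) ∩ G).card := by
  have hFG : t ≤ (F ∩ G).card := hcross F hF G hG
  -- notation
  set a := (A ∩ G).card with ha_def
  set b := (B ∩ G).card with hb_def
  have hFGA : (F ∩ G) ∩ A = A ∩ G := by
    ext x
    simp only [Finset.mem_inter]
    exact ⟨fun ⟨⟨_, h2⟩, h3⟩ => ⟨h3, h2⟩, fun ⟨h1, h2⟩ => ⟨⟨hAF h1, h2⟩, h1⟩⟩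
  have h1 : ((F ∩ G) \ A).card + a = (F ∩ G).card := by
    rw [ha_def, ← hFGA]; exact Finset.card_sdiff_add_card_inter _ _
  have hcard : (((F \ A) ∪ B) ∩ G).card = ((F ∩ G) \ A).card + b :=
    inter_shift_card F A B G hBF
  have ha_le : a ≤ k := by
    rw [← hA]; exact Finset.card_le_card (Finset.inter_subset_left)
  by_cases hba : a ≤ b
  · omega
  push_neg at hba
  by_cases hak : a = k ∧ b = 0
  · -- edge case : A ⊆ G, Disjoint B G
    obtain ⟨hak1, hbk0⟩ := hak
    have hAG : A ⊆ G := by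
      have : A ∩ G = A := Finset.eq_of_subset_of_card_le Finset.inter_subset_left
        (le_of_eq (by rw [hA, ← ha_def, hak1]))
      rw [← this]; exact Finset.inter_subset_right
    have hBG : Disjoint B G := by
      rw [← Finset.disjoint_coe]
      have : B ∩ G = ∅ := Finset.card_eq_zero.1 hbk0
      rw [Finset.disjoint_coe, Finset.disjoint_iff_inter_eq_empty]; exact this
    have hG' : (G \ A) ∪ B ∈ F₂ := hGfix hAG hBG
    have ht' : t ≤ (F ∩ ((G \ A) ∪ B)).card := hcross F hF _ hG'
    rw [Finset.inter_comm, inter_shift_card G A B F hBG] at ht'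
    have hGFA : (G ∩ F) ∩ A = A := by
      ext x
      simp only [Finset.mem_inter]
      exact ⟨fun h => h.2, fun h => ⟨⟨hAG h, hAF h⟩, h⟩⟩
    have h2 := Finset.card_sdiff_add_card_inter (G ∩ F) A
    rw [hGFA] at h2
    have hBFempty : (B ∩ F).card = 0 := by
      rw [Finset.card_eq_zero, ← Finset.disjoint_iff_inter_eq_empty]; exact hBF
    have hcomm : (G ∩ F).card = (F ∩ G).card := by rw [Finset.inter_comm]
    omega
  · -- main case : use stability with i = a - b, 1 ≤ i < k
    have hik : a - b < k := by omega
    obtain ⟨X, hXsub, hXcard⟩ := Finset.exists_subset_card_eq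
      (show a - b ≤ (A ∩ G).card by omega)
    have hBGcard : (B \ G).card + b = k + 1 := by
      rw [hb_def, ← hB]; exact Finset.card_sdiff_add_card_inter _ _
    obtain ⟨Y, hYsub, hYcard⟩ := Finset.exists_subset_card_eq
      (show (a - b) + 1 ≤ (B \ G).card by omega)
    have hXA : X ⊆ A := hXsub.trans Finset.inter_subset_left
    have hXG : X ⊆ G := hXsub.trans Finset.inter_subset_right
    have hYB : Y ⊆ B := hYsub.trans (Finset.sdiff_subset)
    have hYG : Disjoint Y G := Finset.disjoint_left.2 fun x hx =>
      (Finset.mem_sdiff.1 (hYsub hx)).2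
    have hXY : Disjoint X Y := hAB.mono hXA hYB
    have hG2 : (G \ X) ∪ Y ∈ F₂ :=
      stable_mem (hstab₂ _ hik) hG hXY hXcard hYcard hXG hYG
    have ht2 : t ≤ (F ∩ ((G \ X) ∪ Y)).card := hcross F hF _ hG2
    rw [Finset.inter_comm, inter_shift_card G X Y F hYG] at ht2
    have hYFempty : (Y ∩ F).card = 0 := by
      rw [Finset.card_eq_zero, ← Finset.disjoint_iff_inter_eq_empty]
      exact (hBF.mono_left hYB)
    have hGFX : (G ∩ F) ∩ X = X := by
      ext x
      simp only [Finset.mem_inter]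
      exact ⟨fun h => h.2, fun h => ⟨⟨hXG h, hAF (hXA h)⟩, h⟩⟩
    have h2 := Finset.card_sdiff_add_card_inter (G ∩ F) X
    rw [hGFX] at h2
    have hcomm : (G ∩ F).card = (F ∩ G).card := by rw [Finset.inter_comm]
    omega

/-- Both shifted case. -/
lemma both_shifted {n t k : ℕ} {F G A B : Finset (Fin n)}
    (hA : A.card = k) (hB : B.card = k + 1)
    (hAF : A ⊆ F) (hBF : Disjoint B F) (hAG : A ⊆ G) (hBG : Disjoint B G)
    (hFG : t ≤ (F ∩ G).card) :
    t ≤ (((F \ A) ∪ B) ∩ ((G \ A) ∪ B)).card := by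
  have hset : ((F \ A) ∪ B) ∩ ((G \ A) ∪ B) = ((F ∩ G) \ A) ∪ B := by
    ext x
    simp only [Finset.mem_inter, Finset.mem_union, Finset.mem_sdiff]
    tauto
  rw [hset, Finset.card_union_of_disjoint
    (Finset.disjoint_left.2 fun x hx hx' =>
      (Finset.disjoint_left.1 hBF) hx' (Finset.mem_inter.1 (Finset.mem_sdiff.1 hx).1).1)]
  have h1 : ((F ∩ G) \ A).card + ((F ∩ G) ∩ A).card = (F ∩ G).card :=
    Finset.card_sdiff_add_card_inter _ _
  have h2 : ((F ∩ G) ∩ A).card ≤ k := by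
    rw [← hA]; exact Finset.card_le_card Finset.inter_subset_right
  omega

theorem stmt6 (n t k : ℕ) (F₁ F₂ : Finset (Finset (Fin n)))
    (hcross : ∀ F ∈ F₁, ∀ G ∈ F₂, t ≤ (F ∩ G).card)
    (A B : Finset (Fin n)) (hAB : Disjoint A B) (hA : A.card = k) (hB : B.card = k + 1)
    (hstab₁ : ∀ i < k, IsStable i F₁) (hstab₂ : ∀ i < k, IsStable i F₂) :
    ∀ F ∈ shiftFam A B F₁, ∀ G ∈ shiftFam A B F₂, t ≤ (F ∩ G).card := by
  intro F hF G hG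
  rw [shiftFam, Finset.mem_image] at hF hG
  obtain ⟨F0, hF0, hF0eq⟩ := hF
  obtain ⟨G0, hG0, hG0eq⟩ := hG
  by_cases hcF : A ⊆ F0 ∧ Disjoint B F0 ∧ (F0 \ A) ∪ B ∉ F₁ <;>
  by_cases hcG : A ⊆ G0 ∧ Disjoint B G0 ∧ (G0 \ A) ∪ B ∉ F₂ <;>
  simp only [hcF, hcG, if_pos, if_neg, not_false_iff, if_true] at hF0eq hG0eq <;>
  subst hF0eq <;> subst hG0eq
  · -- both shifted
    exact both_shifted hA hB hcF.1 hcF.2.1 hcG.1 hcG.2.1 (hcross F0 hF0 G0 hG0)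
  · -- F shifted, G fixed
    push_neg at hcG
    exact key_lemma hcross hAB hA hB hstab₂ hF0 hcF.1 hcF.2.1 hG0 hcG
  · -- F fixed, G shifted
    push_neg at hcF
    rw [Finset.inter_comm]
    exact key_lemma (fun G hG F hF => by rw [Finset.inter_comm]; exact hcross F hF G hG)
      hAB hA hB hstab₁ hG0 hcG.1 hcG.2.1 hF0 hcF
  · -- both fixed
    exact hcross F0 hF0 G0 hG0
end

section
/- Suppose F ⊆ 2^[n] is nonempty and (i, i+1)-stable for all 0 ≤ i ≤ n−1, and let u = min{|F| : F ∈ F}. Then F contains every subset of [n] of size greater than u, and every member of F has size at least u; that is, ⋃_{j=u+1}^n binom([n], j) ⊆ F ⊆ ⋃_{j=u}^n binom([n], j). -/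
lemma step_lemma {n : ℕ} {F : Finset (Finset (Fin n))}
    (hstab : ∀ i ≤ n - 1, IsStable i F)
    {H : Finset (Fin n)} (hH : H ∈ F) {G : Finset (Fin n)}
    (hcard : G.card = H.card + 1) : G ∈ F := by
  set A : Finset (Fin n) := H \ G with hA
  set B : Finset (Fin n) := G \ H with hB
  have hdisj : Disjoint A B := disjoint_sdiff_sdiff
  have hAH : A ⊆ H := Finset.sdiff_subset
  have hBH : Disjoint B H := Finset.sdiff_disjoint
  have hGn : G.card ≤ n := by
    simpa using Finset.card_le_univ G
  have hHn : H.card ≤ n - 1 := by omega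
  have hAn : A.card ≤ n - 1 := le_trans (Finset.card_le_card hAH) hHn
  have hcardA : A.card + (H ∩ G).card = H.card := Finset.card_sdiff_add_card_inter H G
  have hcardB : B.card + (G ∩ H).card = G.card := Finset.card_sdiff_add_card_inter G H
  have hinter : (H ∩ G).card = (G ∩ H).card := by rw [Finset.inter_comm]
  have hBA : B.card = A.card + 1 := by omega
  have hs := hstab A.card hAn A B hdisj rfl hBA
  have hGeq : (H \ A) ∪ B = G := by
    ext x
    simp only [hA, hB, Finset.mem_union, Finset.mem_sdiff]
    tauto
  by_contra hGF
  have hcond : A ⊆ H ∧ Disjoint B H ∧ (H \ A) ∪ B ∉ F := ⟨hAH, hBH, by rwa [hGeq]⟩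
  have : (H \ A) ∪ B ∈ shiftFam A B F := by
    have := Finset.mem_image_of_mem
      (fun F0 => if A ⊆ F0 ∧ Disjoint B F0 ∧ (F0 \ A) ∪ B ∉ F then (F0 \ A) ∪ B else F0) hH
    simpa [shiftFam, if_pos hcond] using this
  rw [hs, hGeq] at this
  exact hGF this

theorem stmt8 (n u : ℕ) (F : Finset (Finset (Fin n))) (hne : F.Nonempty)
    (hstab : ∀ i ≤ n - 1, IsStable i F)
    (hu : IsLeast {k : ℕ | ∃ A ∈ F, A.card = k} u) :
    (∀ G : Finset (Fin n), u + 1 ≤ G.card → G ∈ F) ∧ (∀ A ∈ F, u ≤ A.card) := by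
  obtain ⟨⟨F0, hF0, hF0card⟩, hlb⟩ := hu
  constructor
  · have key : ∀ k : ℕ, ∀ G : Finset (Fin n), G.card = u + 1 + k → G ∈ F := by
      intro k
      induction k with
      | zero =>
          intro G hG
          exact step_lemma hstab hF0 (by omega)
      | succ m ih =>
          intro G hG
          have hGne : G.Nonempty := Finset.card_pos.mp (by omega)
          obtain ⟨x, hx⟩ := hGne
          have hH : G.erase x ∈ F := ih _ (by rw [Finset.card_erase_of_mem hx]; omega)
          exact step_lemma hstab hH (by rw [Finset.card_erase_of_mem hx] at *; omega)
    intro G hG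
    exact key (G.card - (u + 1)) G (by omega)
  · intro A hA
    exact hlb ⟨A, hA, rfl⟩
end

section
/- Let a, b be positive integers with n ≥ a + b. If A ⊆ binom([n], a) and B ⊆ binom([n], b) are cross intersecting and |A| ≥ binom(n−1, a−1), then |B| ≤ binom(n−1, b−1). -/
set_option maxHeartbeats 1000000

open Nat Finset Finset.Colex
open scoped symmDiff
open scoped FinsetFamily

private lemma pascal_aux (n a : ℕ) (hn : 1 ≤ n) (ha : 1 ≤ a) :
    n.choose a = (n - 1).choose (a - 1) + (n - 1).choose a := by
  cases n with
  | zero => omega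
  | succ m =>
    cases a with
    | zero => omega
    | succ c => simp [Nat.choose_succ_succ, Nat.succ_sub_one]

section Aux
attribute [-instance] instDecidableEqFin

private lemma stmt9_aux (n a b : ℕ) (ha : 1 ≤ a) (hb : 1 ≤ b) (hn : a + b ≤ n)
    (A B : Finset (Finset (Fin n)))
    (hA : ∀ S ∈ A, S.card = a) (hB : ∀ T ∈ B, T.card = b)
    (hcross : ∀ S ∈ A, ∀ T ∈ B, ¬ Disjoint S T)
    (hAcard : (n - 1).choose (a - 1) ≤ A.card) :
    B.card ≤ (n - 1).choose (b - 1) := by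
  by_contra hcon
  push_neg at hcon
  set k := n - b with hk
  set i := n - b - a with hi
  have hbn : b ≤ n := le_trans (Nat.le_add_left b a) hn
  have hak : a ≤ k := by omega
  have hk1 : 1 ≤ k := by omega
  have hkn1 : k ≤ n - 1 := by omega
  have hn1 : 1 ≤ n := by omega
  have hika : k - i = a := by omega
  -- the complement family
  have hBc : ((Bᶜˢ : Finset (Finset (Fin n))) : Set (Finset (Fin n))).Sized k := by
    intro T hT
    rw [mem_coe, mem_compls] at hT
    have hTb := hB _ hT
    have := Finset.card_compl T
    rw [hTb, Fintype.card_fin] at this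
    have h2 : T.card = n - Tᶜ.card := by
      have := Finset.card_compl Tᶜ
      rw [compl_compl, Fintype.card_fin] at this
      omega
    omega
  have hBcard : #Bᶜˢ = #B := card_compls B
  -- the ground-set minus top element, and the special initial segment
  have htoplt : n - 1 < n := by omega
  set top : Fin n := ⟨n - 1, htoplt⟩ with htop
  have hJmem : ∀ m ∈ Finset.range (n - 1), m < n := fun m hm => by
    rw [Finset.mem_range] at hm; omega
  set J : Finset (Fin n) := Finset.attachFin (Finset.range (n - 1)) hJmem with hJ
  have hJcard : #J = n - 1 := by rw [hJ, card_attachFin, card_range]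
  have htopJ : top ∉ J := by
    rw [hJ, mem_attachFin, Finset.mem_range, htop, Fin.val_mk]; omega
  have hbasemem : ∀ m ∈ Finset.range (k - 1), m < n := fun m hm => by
    rw [Finset.mem_range] at hm; omega
  set base : Finset (Fin n) := Finset.attachFin (Finset.range (k - 1)) hbasemem
    with hbase
  have htopbase : top ∉ base := by
    rw [hbase, mem_attachFin, Finset.mem_range, htop, Fin.val_mk]; omega
  set s : Finset (Fin n) := insert top base with hs
  have hscard : #s = k := by
    rw [hs, card_insert_of_notMem htopbase, hbase, card_attachFin, card_range]
    omega
  have hmem_s : ∀ x : Fin n, x ∈ s ↔ x = top ∨ (x : ℕ) < k - 1 := by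
    intro x
    rw [hs, Finset.mem_insert, hbase, mem_attachFin, Finset.mem_range]
  set 𝒞 : Finset (Finset (Fin n)) := initSeg s with h𝒞
  -- Step A : #𝒞 ≤ (n-1).choose k + 1
  have hCsub : 𝒞 ⊆ insert s (Finset.powersetCard k J) := by
    intro t ht
    rw [h𝒞, mem_initSeg] at ht
    obtain ⟨hcard, hle⟩ := ht
    rw [Finset.mem_insert]
    by_cases hts : t = s
    · exact Or.inl hts
    · right
      have hlt : toColex t < toColex s := lt_of_le_of_ne hle (by simpa using hts)
      rw [toColex_lt_toColex_iff_max'_mem] at hlt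
      obtain ⟨hne, hmax⟩ := hlt
      set m := (t ∆ s).max' (symmDiff_nonempty.2 hne) with hm
      have hmts : m ∈ t ∆ s := Finset.max'_mem _ _
      have htopt : top ∉ t := by
        intro htopt
        have htops : top ∈ s := Finset.mem_insert_self _ _
        have hmnetop : m ≠ top := by
          intro h
          rw [Finset.mem_symmDiff, h] at hmts
          rcases hmts with ⟨h1, h2⟩ | ⟨h1, h2⟩
          · exact h2 htops
          · exact h2 htopt
        have hmax2 : m ∈ s := by rw [hm]; exact hmax
        have hmval : (m : ℕ) < k - 1 := by
          rcases (hmem_s m).1 hmax2 with h | h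
          · exact absurd h hmnetop
          · exact h
        have htsub : t ⊆ s := by
          intro x hx
          by_contra hxs
          have hxm : x ≤ m := Finset.le_max' _ _ (Finset.mem_symmDiff.2 (Or.inl ⟨hx, hxs⟩))
          have hxval : (x : ℕ) < k - 1 := lt_of_le_of_lt hxm hmval
          exact hxs ((hmem_s x).2 (Or.inr hxval))
        exact hts (Finset.eq_of_subset_of_card_le htsub (le_of_eq hcard))
      rw [Finset.mem_powersetCard]
      refine ⟨fun x hx => ?_, by rw [← hcard, hscard]⟩
      rw [hJ, mem_attachFin, Finset.mem_range]
      have hxne : x ≠ top := fun h => htopt (h ▸ hx)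
      have : (x : ℕ) ≠ n - 1 := fun h => hxne (Fin.ext h)
      omega
  have hCcard : #𝒞 ≤ (n - 1).choose k + 1 := by
    calc #𝒞 ≤ #(insert s (Finset.powersetCard k J)) := Finset.card_le_card hCsub
      _ ≤ #(Finset.powersetCard k J) + 1 := Finset.card_insert_le _ _
      _ = (n - 1).choose k + 1 := by rw [Finset.card_powersetCard, hJcard]
  -- choose symmetry
  have hchoose : (n - 1).choose k = (n - 1).choose (b - 1) := by
    have h1 : k ≤ n - 1 := hkn1
    have := Nat.choose_symm h1
    rw [show n - 1 - k = b - 1 by omega] at this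
    omega
  -- Step B : #𝒞 ≤ #Bᶜˢ
  have hCB : #𝒞 ≤ #Bᶜˢ := by
    rw [hBcard]; omega
  -- Step C : lower bound on the iterated shadow of 𝒞
  have hbase2mem : ∀ m ∈ Finset.Ico i (k - 1), m < n := fun m hm => by
    rw [Finset.mem_Ico] at hm; omega
  set base2 : Finset (Fin n) := Finset.attachFin (Finset.Ico i (k - 1)) hbase2mem
    with hbase2
  have htopbase2 : top ∉ base2 := by
    rw [hbase2, mem_attachFin, Finset.mem_Ico, htop, Fin.val_mk]; omega
  set t0 : Finset (Fin n) := insert top base2 with ht0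
  have ht0card : #t0 = a := by
    rw [ht0, card_insert_of_notMem htopbase2, hbase2, card_attachFin, Nat.card_Ico]
    omega
  have ht0sub : t0 ⊆ s := by
    rw [ht0, hs]
    apply Finset.insert_subset_insert
    intro x hx
    rw [hbase2, mem_attachFin, Finset.mem_Ico] at hx
    rw [hbase, mem_attachFin, Finset.mem_range]
    exact hx.2
  have ht0shadow : t0 ∈ ∂^[i] 𝒞 := by
    rw [mem_shadow_iterate_iff_exists_sdiff]
    exact ⟨s, mem_initSeg_self, ht0sub, by
      rw [Finset.card_sdiff_of_subset ht0sub, hscard, ht0card]; try omega⟩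
  have hpowsub : Finset.powersetCard a J ⊆ ∂^[i] 𝒞 := by
    intro x hx
    rw [Finset.mem_powersetCard] at hx
    obtain ⟨hxJ, hxa⟩ := hx
    obtain ⟨C, hxC, hCJ, hCk⟩ :=
      Finset.exists_subsuperset_card_eq (n := k) hxJ (by omega) (by omega)
    have hCinit : C ∈ 𝒞 := by
      rw [h𝒞, mem_initSeg]
      refine ⟨by rw [hscard, hCk], le_of_lt ?_⟩
      rw [toColex_lt_toColex_iff_exists_forall_lt]
      refine ⟨top, by rw [hs]; exact Finset.mem_insert_self _ _,
        fun h => htopJ (hCJ h), fun y hy _ => ?_⟩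
      have hyv : (y : ℕ) < n - 1 := by
        have h2 := hCJ hy
        rw [hJ, mem_attachFin, Finset.mem_range] at h2
        exact h2
      refine Fin.lt_def.2 ?_
      rw [htop, Fin.val_mk]
      exact hyv
    rw [mem_shadow_iterate_iff_exists_sdiff]
    exact ⟨C, hCinit, hxC, by rw [Finset.card_sdiff_of_subset hxC, hCk, hxa]; try omega⟩
  have ht0notpow : t0 ∉ Finset.powersetCard a J := by
    rw [Finset.mem_powersetCard]
    rintro ⟨hsub, -⟩
    exact htopJ (hsub (by rw [ht0]; exact Finset.mem_insert_self _ _))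
  have hClower : (n - 1).choose a + 1 ≤ #(∂^[i] 𝒞) := by
    have hins : insert t0 (Finset.powersetCard a J) ⊆ ∂^[i] 𝒞 :=
      Finset.insert_subset ht0shadow hpowsub
    have := Finset.card_le_card hins
    rw [card_insert_of_notMem ht0notpow, Finset.card_powersetCard, hJcard] at this
    omega
  -- Step D : Kruskal-Katona
  have hIS : IsInitSeg 𝒞 k := by
    rw [h𝒞, ← hscard]; exact isInitSeg_initSeg
  have hKK : #(∂^[i] 𝒞) ≤ #(∂^[i] Bᶜˢ) := iterated_kk hBc hCB hIS
  -- Step E : disjointness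
  have hdisj : Disjoint A (∂^[i] Bᶜˢ) := by
    rw [Finset.disjoint_right]
    intro u hu huA
    rw [mem_shadow_iterate_iff_exists_sdiff] at hu
    obtain ⟨C, hC, huC, -⟩ := hu
    rw [mem_compls] at hC
    exact hcross u huA Cᶜ hC (disjoint_compl_right.mono_left huC)
  -- Step F : sizes
  have hshadowsized : ((∂^[i] Bᶜˢ : Finset (Finset (Fin n))) :
      Set (Finset (Fin n))).Sized a := by
    have := hBc.shadow_iterate (k := i)
    rwa [hika] at this
  -- Step G : final counting
  have hunion : A ∪ ∂^[i] Bᶜˢ ⊆ Finset.powersetCard a (Finset.univ : Finset (Fin n)) := by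
    intro u hu
    rw [Finset.mem_union] at hu
    rw [Finset.mem_powersetCard]
    refine ⟨Finset.subset_univ _, ?_⟩
    rcases hu with h | h
    · exact hA _ h
    · exact hshadowsized h
  have hcount : #A + #(∂^[i] Bᶜˢ) ≤ n.choose a := by
    have := Finset.card_le_card hunion
    rwa [Finset.card_union_of_disjoint hdisj, Finset.card_powersetCard,
      Finset.card_univ, Fintype.card_fin] at this
  have hpascal : n.choose a = (n - 1).choose (a - 1) + (n - 1).choose a :=
    pascal_aux n a hn1 ha
  omega

end Aux

attribute [instance] instDecidableEqFin

theorem stmt9 (n a b : ℕ) (ha : 1 ≤ a) (hb : 1 ≤ b) (hn : a + b ≤ n)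
    (A B : Finset (Finset (Fin n)))
    (hA : ∀ S ∈ A, S.card = a) (hB : ∀ T ∈ B, T.card = b)
    (hcross : ∀ S ∈ A, ∀ T ∈ B, (S ∩ T).Nonempty)
    (hAcard : (n - 1).choose (a - 1) ≤ A.card) :
    B.card ≤ (n - 1).choose (b - 1) := by
  exact stmt9_aux n a b ha hb hn A B hA hB
    (fun S hS T hT => Finset.not_disjoint_iff_nonempty_inter.2 (hcross S hS T hT)) hAcard
end

section
/- If F₁, F₂ ⊆ 2^[n] satisfy F₁ ∩ F₂ ≠ ∅ and F₁ ∪ F₂ ≠ [n] for all F₁ ∈ F₁ and F₂ ∈ F₂, then |F₁| · |F₂| ≤ 2^{2n−4}. -/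
open Finset

theorem stmt10 (n : ℕ) (hn : 2 ≤ n) (F₁ F₂ : Finset (Finset (Fin n)))
    (h : ∀ A ∈ F₁, ∀ B ∈ F₂, (A ∩ B).Nonempty ∧ A ∪ B ≠ Finset.univ) :
    F₁.card * F₂.card ≤ 2 ^ (2 * n - 4) := by
  classical
  set D : Finset (Finset (Fin n)) :=
    Finset.univ.filter (fun S => ∃ A ∈ F₁, S ⊆ A) with hD
  set U : Finset (Finset (Fin n)) :=
    Finset.univ.filter (fun S => ∃ A ∈ F₁, A ⊆ S) with hU
  have hDlow : IsLowerSet (D : Set (Finset (Fin n))) := by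
    intro s t hts hs
    simp only [hD, coe_filter, Set.mem_setOf_eq, mem_univ, true_and] at hs ⊢
    obtain ⟨A, hA, hsA⟩ := hs
    exact ⟨A, hA, hts.trans hsA⟩
  have hUup : IsUpperSet (U : Set (Finset (Fin n))) := by
    intro s t hts hs
    simp only [hU, coe_filter, Set.mem_setOf_eq, mem_univ, true_and] at hs ⊢
    obtain ⟨A, hA, hAs⟩ := hs
    exact ⟨A, hA, hAs.trans hts⟩
  -- Harris–Kleitman: lower and upper sets anticorrelate
  have hHK : 2 ^ n * (D ∩ U).card ≤ D.card * U.card := by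
    have := hDlow.card_inter_le_finset hUup
    simpa using this
  -- F₁ ⊆ D ∩ U
  have hF₁ : F₁ ⊆ D ∩ U := by
    intro A hA
    simp only [mem_inter, hD, hU, mem_filter, mem_univ, true_and]
    exact ⟨⟨A, hA, subset_rfl⟩, ⟨A, hA, subset_rfl⟩⟩
  -- the complements of F₂ avoid D ∪ U
  have hF₂ : F₂.card + (D ∪ U).card ≤ 2 ^ n := by
    have himg : (F₂.image compl).card = F₂.card :=
      Finset.card_image_of_injective _ compl_injective
    have hdisj : Disjoint (F₂.image compl) (D ∪ U) := by
      rw [Finset.disjoint_left]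
      intro S hS hSDU
      simp only [mem_image] at hS
      obtain ⟨B, hB, rfl⟩ := hS
      rcases Finset.mem_union.1 hSDU with hSD | hSU
      · simp only [hD, mem_filter, mem_univ, true_and] at hSD
        obtain ⟨A, hA, hBA⟩ := hSD
        refine (h A hA B hB).2 ?_
        rw [Finset.eq_univ_iff_forall]
        intro x
        rcases em (x ∈ B) with hx | hx
        · exact Finset.mem_union.2 (Or.inr hx)
        · exact Finset.mem_union.2 (Or.inl (hBA (by simpa using hx)))
      · simp only [hU, mem_filter, mem_univ, true_and] at hSU
        obtain ⟨A, hA, hAB⟩ := hSU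
        obtain ⟨x, hx⟩ := (h A hA B hB).1
        rw [Finset.mem_inter] at hx
        have := hAB hx.1
        simp only [Finset.mem_compl] at this
        exact this hx.2
    calc F₂.card + (D ∪ U).card = (F₂.image compl ∪ (D ∪ U)).card := by
          rw [Finset.card_union_of_disjoint hdisj, himg]
      _ ≤ (Finset.univ : Finset (Finset (Fin n))).card := Finset.card_le_card (subset_univ _)
      _ = 2 ^ n := by simp [Fintype.card_finset]
  -- inclusion-exclusion
  have hIE : (D ∪ U).card + (D ∩ U).card = D.card + U.card :=
    Finset.card_union_add_card_inter D U
  -- pass to integers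
  set N : ℤ := 2 ^ n with hN
  have key : 16 * ((F₁.card : ℤ) * F₂.card) ≤ N * N := by
    have f1 : (F₁.card : ℤ) ≤ (D ∩ U).card := by
      exact_mod_cast Finset.card_le_card hF₁
    have f2 : (F₂.card : ℤ) + (D.card + U.card) ≤ N + (D ∩ U).card := by
      have : (F₂.card : ℤ) + ((D ∪ U).card) ≤ 2 ^ n := by exact_mod_cast hF₂
      rw [hN]
      have hIE' : ((D ∪ U).card : ℤ) + (D ∩ U).card = D.card + U.card := by
        exact_mod_cast hIE
      linarith
    have f3 : N * ((D ∩ U).card : ℤ) ≤ D.card * U.card := by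
      have := hHK
      rw [hN]
      exact_mod_cast this
    have hDle : (D.card : ℤ) ≤ N := by
      rw [hN]; exact_mod_cast Finset.card_le_card (subset_univ D) |>.trans
        (by simp [Fintype.card_finset])
    have hUle : (U.card : ℤ) ≤ N := by
      rw [hN]; exact_mod_cast Finset.card_le_card (subset_univ U) |>.trans
        (by simp [Fintype.card_finset])
    set a : ℤ := (D.card : ℤ)
    set b : ℤ := (U.card : ℤ)
    set c : ℤ := ((D ∩ U).card : ℤ)
    set f : ℤ := (F₁.card : ℤ)
    set g : ℤ := (F₂.card : ℤ)
    have ha : 0 ≤ a := Int.ofNat_nonneg _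
    have hb : 0 ≤ b := Int.ofNat_nonneg _
    have hc : 0 ≤ c := Int.ofNat_nonneg _
    have hf : 0 ≤ f := Int.ofNat_nonneg _
    have hg : 0 ≤ g := Int.ofNat_nonneg _
    have hNpos : 0 < N := by positivity
    -- N*g ≤ (N-a)*(N-b)
    have h2 : N * g ≤ (N - a) * (N - b) := by nlinarith
    have hfg : f * g ≤ c * g := mul_le_mul_of_nonneg_right f1 hg
    have hgN : 0 ≤ N * g := mul_nonneg (le_of_lt hNpos) hg
    have hab : 0 ≤ a * b := mul_nonneg ha hb
    have h3 : (f * g) * (N * N) ≤ (a * b) * ((N - a) * (N - b)) := by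
      calc (f * g) * (N * N) ≤ (c * g) * (N * N) :=
              mul_le_mul_of_nonneg_right hfg (by positivity)
        _ = (N * c) * (N * g) := by ring
        _ ≤ (a * b) * ((N - a) * (N - b)) := mul_le_mul f3 h2 hgN hab
    have h4 : 4 * (a * (N - a)) ≤ N * N := by nlinarith [sq_nonneg (2 * a - N)]
    have h5 : 4 * (b * (N - b)) ≤ N * N := by nlinarith [sq_nonneg (2 * b - N)]
    have hNb : 0 ≤ 4 * (b * (N - b)) := by
      have := mul_nonneg hb (sub_nonneg.2 hUle); linarith
    have h6 : (16 * (f * g)) * (N * N) ≤ (N * N) * (N * N) := by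
      calc (16 * (f * g)) * (N * N) ≤ 16 * ((a * b) * ((N - a) * (N - b))) := by linarith
        _ = (4 * (a * (N - a))) * (4 * (b * (N - b))) := by ring
        _ ≤ (N * N) * (N * N) := mul_le_mul h4 h5 hNb (by positivity)
    exact le_of_mul_le_mul_right h6 (mul_pos hNpos hNpos)
  -- conclude
  have h2n : (2 : ℤ) ^ (2 * n) = N * N := by rw [hN]; rw [two_mul, pow_add]
  have hpow : (16 : ℤ) * 2 ^ (2 * n - 4) = N * N := by
    rw [← h2n]
    have h4n : 2 * n - 4 + 4 = 2 * n := by omega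
    calc (16 : ℤ) * 2 ^ (2 * n - 4) = 2 ^ (2 * n - 4) * 2 ^ 4 := by ring
      _ = 2 ^ (2 * n - 4 + 4) := (pow_add 2 _ 4).symm
      _ = 2 ^ (2 * n) := by rw [h4n]
  have : (F₁.card : ℤ) * F₂.card ≤ 2 ^ (2 * n - 4) := by
    have h16 : (0 : ℤ) < 16 := by norm_num
    have := key
    rw [← hpow] at this
    exact le_of_mul_le_mul_left this h16
  exact_mod_cast this
end

section
/- Let P, Q ⊊ [m] be nonempty disjoint subsets, and let H₁, H₂ ⊆ [m]^n be such that H₁ is P-complete and H₂ is Q-complete. Then |H₁ ∩ H₂| / m^n ≤ (|H₁| / m^n) · (|H₂| / m^n). -/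
/-- The relation `<_P` on `[m]^n`: `x <_P y` iff for every coordinate `i`,
either `x i = y i` or `x i ∉ P`. -/
def relP {m n : ℕ} (P : Finset (Fin m)) (x y : Fin n → Fin m) : Prop :=
  ∀ i : Fin n, x i = y i ∨ x i ∉ P

/-- A family `H ⊆ [m]^n` is `P`-complete if `x <_P y` and `x ∈ H` imply `y ∈ H`. -/
def PComplete {m n : ℕ} (P : Finset (Fin m)) (H : Finset (Fin n → Fin m)) : Prop :=
  ∀ x y : Fin n → Fin m, relP P x y → x ∈ H → y ∈ H
lemma card_slices {m n : ℕ} (H : Finset (Fin (n+1) → Fin m)) :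
    H.card = ∑ a : Fin m, (Finset.univ.filter fun x : Fin n → Fin m => Fin.cons a x ∈ H).card := by
  classical
  have h : H.card = (Finset.univ.filter fun p : Fin m × (Fin n → Fin m) =>
      Fin.cons p.1 p.2 ∈ H).card := by
    apply Finset.card_bij' (fun x _ => (x 0, Fin.tail x)) (fun p _ => Fin.cons p.1 p.2)
    case hi => intro x hx; simp [Fin.cons_self_tail, hx]
    case hj => intro p hp; simpa using hp
    case left_inv => intro x hx; exact Fin.cons_self_tail x
    case right_inv => intro p hp; simp [Fin.tail_cons]
  rw [h, Finset.card_filter, Fintype.sum_prod_type]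
  simp only [Finset.card_filter]

lemma arith (m α β : ℕ) (φ ψ : Fin m → ℕ) (hz : ∀ a, φ a = 0 ∨ ψ a = 0) :
    m * ∑ a : Fin m, (α + φ a) * (β + ψ a) ≤
      (∑ a : Fin m, (α + φ a)) * (∑ a : Fin m, (β + ψ a)) := by
  have h1 : ∀ a : Fin m, (α + φ a) * (β + ψ a) = α*β + α * ψ a + β * φ a := by
    intro a; rcases hz a with h|h <;> simp [h] <;> ring
  simp only [h1, Finset.sum_add_distrib, Finset.sum_const, Finset.card_univ,
    Fintype.card_fin, smul_eq_mul, ← Finset.mul_sum]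
  nlinarith [Nat.zero_le ((∑ a : Fin m, φ a) * (∑ a : Fin m, ψ a))]

lemma slice_complete {m n : ℕ} (R : Finset (Fin m)) (H : Finset (Fin (n+1) → Fin m))
    (hH : PComplete R H) (a : Fin m) :
    PComplete R (Finset.univ.filter fun x : Fin n → Fin m => Fin.cons a x ∈ H) := by
  intro x y hxy hx
  simp only [Finset.mem_filter, Finset.mem_univ, true_and] at hx ⊢
  refine hH _ _ ?_ hx
  intro i
  refine Fin.cases ?_ ?_ i
  · left; simp
  · intro j; simp only [Fin.cons_succ]; exact hxy j

lemma key (m : ℕ) (P Q : Finset (Fin m)) (hPu : P ≠ Finset.univ) (hQu : Q ≠ Finset.univ)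
    (hPQ : Disjoint P Q) :
    ∀ n (H₁ H₂ : Finset (Fin n → Fin m)), PComplete P H₁ → PComplete Q H₂ →
      (H₁ ∩ H₂).card * m ^ n ≤ H₁.card * H₂.card := by
  intro n
  induction n with
  | zero =>
    intro H₁ H₂ _ _
    rcases Nat.eq_zero_or_pos (H₁ ∩ H₂).card with h | h
    · simp [h]
    · have l1 : (H₁ ∩ H₂).card ≤ H₁.card := Finset.card_le_card Finset.inter_subset_left
      have l2 : (H₁ ∩ H₂).card ≤ H₂.card := Finset.card_le_card Finset.inter_subset_right
      calc (H₁ ∩ H₂).card * m ^ 0 = (H₁ ∩ H₂).card * 1 := rfl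
        _ ≤ H₁.card * H₂.card := Nat.mul_le_mul l1 (Nat.le_trans h l2)
  | succ n ih =>
    intro H₁ H₂ h₁ h₂
    classical
    set S₁ : Fin m → Finset (Fin n → Fin m) :=
      fun a => Finset.univ.filter fun x => Fin.cons a x ∈ H₁ with hS₁
    set S₂ : Fin m → Finset (Fin n → Fin m) :=
      fun a => Finset.univ.filter fun x => Fin.cons a x ∈ H₂ with hS₂
    have mono₁ : ∀ a b : Fin m, a ∉ P → S₁ a ⊆ S₁ b := by
      intro a b ha x hx
      simp only [hS₁, Finset.mem_filter, Finset.mem_univ, true_and] at hx ⊢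
      refine h₁ _ _ ?_ hx
      intro i
      refine Fin.cases ?_ ?_ i
      · right; simpa using ha
      · intro j; left; simp
    have mono₂ : ∀ a b : Fin m, a ∉ Q → S₂ a ⊆ S₂ b := by
      intro a b ha x hx
      simp only [hS₂, Finset.mem_filter, Finset.mem_univ, true_and] at hx ⊢
      refine h₂ _ _ ?_ hx
      intro i
      refine Fin.cases ?_ ?_ i
      · right; simpa using ha
      · intro j; left; simp
    obtain ⟨c, _, hc⟩ := Finset.exists_of_ssubset (Finset.ssubset_univ_iff.mpr hPu)
    obtain ⟨d, _, hd⟩ := Finset.exists_of_ssubset (Finset.ssubset_univ_iff.mpr hQu)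
    set α := (S₁ c).card with hαdef
    set β := (S₂ d).card with hβdef
    have hα : ∀ a, α ≤ (S₁ a).card := fun a => Finset.card_le_card (mono₁ c a hc)
    have hβ : ∀ a, β ≤ (S₂ a).card := fun a => Finset.card_le_card (mono₂ d a hd)
    have hα0 : ∀ a, a ∉ P → (S₁ a).card = α :=
      fun a ha => le_antisymm (Finset.card_le_card (mono₁ a c ha)) (hα a)
    have hβ0 : ∀ a, a ∉ Q → (S₂ a).card = β :=
      fun a ha => le_antisymm (Finset.card_le_card (mono₂ a d ha)) (hβ a)
    set φ : Fin m → ℕ := fun a => (S₁ a).card - α with hφdef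
    set ψ : Fin m → ℕ := fun a => (S₂ a).card - β with hψdef
    have hf : ∀ a, (S₁ a).card = α + φ a := fun a => (Nat.add_sub_cancel' (hα a)).symm
    have hg : ∀ a, (S₂ a).card = β + ψ a := fun a => (Nat.add_sub_cancel' (hβ a)).symm
    have hz : ∀ a, φ a = 0 ∨ ψ a = 0 := by
      intro a
      by_cases haP : a ∈ P
      · right
        have haQ : a ∉ Q := fun h => (Finset.disjoint_left.mp hPQ haP h)
        simp [hψdef, hβ0 a haQ]
      · left; simp [hφdef, hα0 a haP]
    have c1 : H₁.card = ∑ a, (α + φ a) :=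
      (card_slices H₁).trans (Finset.sum_congr rfl fun a _ => hf a)
    have c2 : H₂.card = ∑ a, (β + ψ a) :=
      (card_slices H₂).trans (Finset.sum_congr rfl fun a _ => hg a)
    have c12 : (H₁ ∩ H₂).card = ∑ a, ((S₁ a) ∩ (S₂ a)).card := by
      rw [card_slices (H₁ ∩ H₂)]
      refine Finset.sum_congr rfl fun a _ => ?_
      congr 1
      ext x
      simp [hS₁, hS₂, Finset.mem_inter]
    have hind : ∀ a, (S₁ a ∩ S₂ a).card * m ^ n ≤ (S₁ a).card * (S₂ a).card :=
      fun a => ih (S₁ a) (S₂ a) (slice_complete P H₁ h₁ a) (slice_complete Q H₂ h₂ a)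
    calc (H₁ ∩ H₂).card * m ^ (n+1)
        = (∑ a, (S₁ a ∩ S₂ a).card * m ^ n) * m := by
          rw [c12, pow_succ, ← mul_assoc, Finset.sum_mul]
      _ ≤ (∑ a, (S₁ a).card * (S₂ a).card) * m :=
          Nat.mul_le_mul_right _ (Finset.sum_le_sum fun a _ => hind a)
      _ = m * ∑ a, (α + φ a) * (β + ψ a) := by
          rw [mul_comm]
          congr 1
          exact Finset.sum_congr rfl fun a _ => by rw [hf a, hg a]
      _ ≤ (∑ a, (α + φ a)) * (∑ a, (β + ψ a)) := arith m α β φ ψ hz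
      _ = H₁.card * H₂.card := by rw [c1, c2]

theorem stmt11 (m n : ℕ) (P Q : Finset (Fin m))
    (hP : P.Nonempty) (hQ : Q.Nonempty) (hPu : P ≠ Finset.univ) (hQu : Q ≠ Finset.univ)
    (hPQ : Disjoint P Q)
    (H₁ H₂ : Finset (Fin n → Fin m))
    (h₁ : PComplete P H₁) (h₂ : PComplete Q H₂) :
    ((H₁ ∩ H₂).card : ℝ) / (m : ℝ) ^ n ≤
      ((H₁.card : ℝ) / (m : ℝ) ^ n) * ((H₂.card : ℝ) / (m : ℝ) ^ n) := by
  have hm : 0 < m := (hP.choose).pos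
  have hk := key m P Q hPu hQu hPQ n H₁ H₂ h₁ h₂
  have hk' : ((H₁ ∩ H₂).card : ℝ) * (m : ℝ) ^ n ≤ (H₁.card : ℝ) * (H₂.card : ℝ) := by
    exact_mod_cast hk
  have hMn : (0:ℝ) < (m : ℝ) ^ n := by positivity
  rw [div_mul_div_comm, div_le_div_iff₀ hMn (by positivity)]
  nlinarith [hk', hMn.le]
end

section
/- For integers n ≥ t ≥ 1 and real p ∈ [1/2, 1), if F ⊆ 2^[n] is t-intersecting, then μ_p(F) ≤ μ_p(K(n,t)). -/
open Finset
open scoped FinsetFamily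

namespace Katona

variable {t i j m n k r N : ℕ} {F : Finset (Finset ℕ)}

def TInt (t : ℕ) (F : Finset (Finset ℕ)) : Prop := ∀ A ∈ F, ∀ B ∈ F, t ≤ #(A ∩ B)

lemma compress_eq_of (hij : i ≠ j) {S : Finset ℕ} (hiS : i ∉ S) (hjS : j ∈ S) :
    UV.compress {i} {j} S = insert i (S.erase j) := by
  unfold UV.compress
  rw [if_pos ⟨disjoint_singleton_left.2 hiS, singleton_subset_iff.2 hjS⟩]
  ext x
  simp only [sup_eq_union, sdiff_singleton_eq_erase, mem_erase, mem_union, mem_insert,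
    mem_singleton]
  constructor
  · rintro ⟨hx, hxS | rfl⟩
    · exact Or.inr ⟨hx, hxS⟩
    · exact Or.inl rfl
  · rintro (rfl | ⟨hx, hxS⟩)
    · exact ⟨hij, Or.inr rfl⟩
    · exact ⟨hx, Or.inl hxS⟩

lemma compress_cases (hij : i ≠ j) (S : Finset ℕ) :
    UV.compress {i} {j} S = S ∨
      (i ∉ S ∧ j ∈ S ∧ UV.compress {i} {j} S = insert i (S.erase j)) := by
  by_cases hiS : i ∈ S
  · left; unfold UV.compress
    rw [if_neg]
    rintro ⟨h, -⟩
    exact (disjoint_singleton_left.1 h) hiS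
  · by_cases hjS : j ∈ S
    · exact Or.inr ⟨hiS, hjS, compress_eq_of hij hiS hjS⟩
    · left; unfold UV.compress
      rw [if_neg]
      rintro ⟨-, h⟩
      exact hjS (singleton_subset_iff.1 h)

lemma key_case (hF : TInt t F) (hij : i ≠ j) {A B : Finset ℕ}
    (hA : A ∈ F) (hcA : UV.compress {i} {j} A ∈ F) (hB : B ∈ F)
    (hiB : i ∉ B) (hjB : j ∈ B) : t ≤ #(A ∩ insert i (B.erase j)) := by
  by_cases hjA : j ∈ A
  · by_cases hiA : i ∈ A
    · have hsub : insert i ((A ∩ B).erase j) ⊆ A ∩ insert i (B.erase j) := by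
        intro x hx
        rcases mem_insert.1 hx with rfl | hx
        · exact mem_inter.2 ⟨hiA, mem_insert_self _ _⟩
        · rw [mem_erase, mem_inter] at hx
          exact mem_inter.2 ⟨hx.2.1, mem_insert_of_mem (mem_erase.2 ⟨hx.1, hx.2.2⟩)⟩
      have h1 : i ∉ (A ∩ B).erase j := fun h => hiB (mem_inter.1 (mem_of_mem_erase h)).2
      have h2 : j ∈ A ∩ B := mem_inter.2 ⟨hjA, hjB⟩
      have hle := card_le_card hsub
      rw [card_insert_of_notMem h1, card_erase_of_mem h2] at hle
      have ht := hF A hA B hB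
      have hpos : 1 ≤ #(A ∩ B) := card_pos.2 ⟨j, h2⟩
      omega
    · rw [compress_eq_of hij hiA hjA] at hcA
      have ht := hF _ hcA B hB
      have he1 : insert i (A.erase j) ∩ B = (A ∩ B).erase j := by
        ext x
        simp only [mem_inter, mem_insert, mem_erase]
        constructor
        · rintro ⟨rfl | ⟨hx, hxA⟩, hxB⟩
          · exact absurd hxB hiB
          · exact ⟨hx, hxA, hxB⟩
        · rintro ⟨hx, hxA, hxB⟩
          exact ⟨Or.inr ⟨hx, hxA⟩, hxB⟩
      have he2 : A ∩ insert i (B.erase j) = (A ∩ B).erase j := by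
        ext x
        simp only [mem_inter, mem_insert, mem_erase]
        constructor
        · rintro ⟨hxA, rfl | ⟨hx, hxB⟩⟩
          · exact absurd hxA hiA
          · exact ⟨hx, hxA, hxB⟩
        · rintro ⟨hx, hxA, hxB⟩
          exact ⟨hxA, Or.inr ⟨hx, hxB⟩⟩
      rw [he2]; rw [he1] at ht; exact ht
  · have hsub : A ∩ B ⊆ A ∩ insert i (B.erase j) := by
      intro x hx
      rw [mem_inter] at hx
      refine mem_inter.2 ⟨hx.1, mem_insert_of_mem (mem_erase.2 ⟨?_, hx.2⟩)⟩
      rintro rfl; exact hjA hx.1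
    exact (hF A hA B hB).trans (card_le_card hsub)

lemma TInt.compression (hF : TInt t F) (i j : ℕ) : TInt t (𝓒 {i} {j} F) := by
  rcases eq_or_ne i j with rfl | hij
  · rwa [UV.compression_self]
  intro A hA B hB
  rw [UV.mem_compression] at hA hB
  rcases hA with ⟨hAF, hcA⟩ | ⟨hAnF, a, haF, rfl⟩ <;>
    rcases hB with ⟨hBF, hcB⟩ | ⟨hBnF, b, hbF, rfl⟩
  · exact hF A hAF B hBF
  · rcases compress_cases hij b with h | ⟨hib, hjb, h⟩
    · rw [h] at hBnF ⊢; exact absurd hbF hBnF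
    · rw [h]; exact key_case hF hij hAF hcA hbF hib hjb
  · rcases compress_cases hij a with h | ⟨hia, hja, h⟩
    · rw [h] at hAnF ⊢; exact absurd haF hAnF
    · rw [h, inter_comm]; exact key_case hF hij hBF hcB haF hia hja
  · rcases compress_cases hij a with h | ⟨hia, hja, h⟩
    · rw [h] at hAnF ⊢; exact absurd haF hAnF
    rcases compress_cases hij b with h' | ⟨hib, hjb, h'⟩
    · rw [h'] at hBnF ⊢; exact absurd hbF hBnF
    rw [h, h']
    have he : insert i (a.erase j) ∩ insert i (b.erase j) = insert i ((a ∩ b).erase j) := by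
      ext x
      simp only [mem_inter, mem_insert, mem_erase]
      tauto
    rw [he]
    have h2 : j ∈ a ∩ b := mem_inter.2 ⟨hja, hjb⟩
    have h1 : i ∉ (a ∩ b).erase j := fun h => hia (mem_inter.1 (mem_of_mem_erase h)).1
    rw [card_insert_of_notMem h1, card_erase_of_mem h2]
    have ht := hF a haF b hbF
    have hpos : 1 ≤ #(a ∩ b) := card_pos.2 ⟨j, h2⟩
    omega

def fm (F : Finset (Finset ℕ)) : ℕ := ∑ A ∈ F, ∑ x ∈ A, x

lemma fm_compression_lt (hij : i < j) (h : 𝓒 {i} {j} F ≠ F) :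
    fm (𝓒 {i} {j} F) < fm F := by
  have hij' : i ≠ j := hij.ne
  rw [UV.compression] at h ⊢
  have q : ∀ Q ∈ {A ∈ F | UV.compress {i} {j} A ∉ F}, UV.compress {i} {j} Q ≠ Q := by
    simp_rw [mem_filter]
    intro Q hQ hh
    rw [hh] at hQ
    exact hQ.2 hQ.1
  have uA : {A ∈ F | UV.compress {i} {j} A ∈ F} ∪ {A ∈ F | UV.compress {i} {j} A ∉ F} = F :=
    filter_union_filter_not_eq _ _
  have ne₂ : {A ∈ F | UV.compress {i} {j} A ∉ F}.Nonempty := by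
    refine nonempty_iff_ne_empty.2 fun z => h ?_
    rw [filter_image, z, image_empty, union_empty]
    rwa [z, union_empty] at uA
  rw [fm, fm, sum_union UV.compress_disjoint]
  conv_rhs => rw [← uA]
  rw [sum_union (disjoint_filter_filter_not _ _ _), add_lt_add_iff_left, filter_image,
    sum_image UV.compress_injOn]
  refine sum_lt_sum_of_nonempty ne₂ fun A hA => ?_
  have hne := q A hA
  rcases compress_cases hij' A with hc | ⟨hiA, hjA, hc⟩
  · exact absurd hc hne
  rw [hc]
  have hij2 : i ∉ A.erase j := fun hh => hiA (mem_of_mem_erase hh)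
  rw [sum_insert hij2]
  have h2 : ∑ x ∈ A.erase j, x + j = ∑ x ∈ A, x := by
    simpa using Finset.sum_erase_add A (fun x => x) hjA
  omega


-- iterated shadow of singleton-compression
lemma card_shadow_iterate_compression_le (i j : ℕ) (r : ℕ) (F : Finset (Finset ℕ)) :
    #(∂^[r] (𝓒 {i} {j} F)) ≤ #(∂^[r] F) := by
  have key : ∀ r, ∂^[r] (𝓒 {i} {j} F) ⊆ 𝓒 {i} {j} (∂^[r] F) := by
    intro r
    induction r with
    | zero => simp
    | succ r ih =>
      rw [Function.iterate_succ_apply', Function.iterate_succ_apply']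
      calc ∂ (∂^[r] (𝓒 {i} {j} F)) ⊆ ∂ (𝓒 {i} {j} (∂^[r] F)) := shadow_mono ih
        _ ⊆ 𝓒 {i} {j} (∂ (∂^[r] F)) := by
            refine UV.shadow_compression_subset_compression_shadow _ _ ?_
            intro x hx
            rw [mem_singleton] at hx
            subst hx
            exact ⟨j, mem_singleton_self _, by simp [UV.isCompressed_self]⟩
  calc #(∂^[r] (𝓒 {i} {j} F)) ≤ #(𝓒 {i} {j} (∂^[r] F)) := card_le_card (key r)
    _ = #(∂^[r] F) := UV.card_compression _ _ _

lemma compression_subset_range (hi : i ∈ range n) (hr : ∀ A ∈ F, A ⊆ range n) :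
    ∀ A ∈ 𝓒 {i} {j} F, A ⊆ range n := by
  intro A hA
  rw [UV.mem_compression] at hA
  rcases hA with ⟨hAF, -⟩ | ⟨-, a, haF, rfl⟩
  · exact hr A hAF
  · unfold UV.compress
    split_ifs
    · refine subset_trans (sdiff_subset) ?_
      rw [sup_eq_union]
      refine union_subset (hr a haF) ?_
      simpa using hi
    · exact hr a haF

lemma compression_sized (hs : ∀ A ∈ F, #A = k) : ∀ A ∈ 𝓒 {i} {j} F, #A = k := by
  have := Set.Sized.uvCompression (u := ({i} : Finset ℕ)) (v := ({j} : Finset ℕ))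
    (𝒜 := F) (r := k) (by simp) hs
  exact this

/-- Compress away until fully `(i, m)`-compressed for all `i < m`. -/
lemma exists_compressed (m n k t : ℕ) (hm : m ∈ range n) :
    ∀ (N : ℕ) (F : Finset (Finset ℕ)), fm F ≤ N → TInt t F → (∀ A ∈ F, #A = k) →
      (∀ A ∈ F, A ⊆ range n) →
    ∃ G : Finset (Finset ℕ), TInt t G ∧ (∀ A ∈ G, #A = k) ∧ (∀ A ∈ G, A ⊆ range n) ∧
      #G = #F ∧ (∀ r, #(∂^[r] G) ≤ #(∂^[r] F)) ∧ ∀ i < m, UV.IsCompressed {i} {m} G := by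
  intro N
  induction N with
  | zero =>
    intro F hfm hint hsz hrg
    refine ⟨F, hint, hsz, hrg, rfl, fun _ => le_rfl, ?_⟩
    intro i him
    by_contra hc
    have := fm_compression_lt him hc
    omega
  | succ N ih =>
    intro F hfm hint hsz hrg
    by_cases hc : ∀ i < m, UV.IsCompressed {i} {m} F
    · exact ⟨F, hint, hsz, hrg, rfl, fun _ => le_rfl, hc⟩
    push_neg at hc
    obtain ⟨i, him, hnc⟩ := hc
    have hlt := fm_compression_lt him hnc
    obtain ⟨G, h1, h2, h3, h4, h5, h6⟩ := ih (𝓒 {i} {m} F) (by omega)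
      (hint.compression i m) (compression_sized hsz) (compression_subset_range (mem_range.2 ((him).trans (mem_range.1 hm))) hrg)
    refine ⟨G, h1, h2, h3, h4.trans (UV.card_compression _ _ _), fun r =>
      (h5 r).trans (card_shadow_iterate_compression_le i m r F), h6⟩

/-- Local LYM over ground set `range n`. -/
lemma local_lym_range (hk : 1 ≤ k) (hsz : ∀ A ∈ F, #A = k) (hrg : ∀ A ∈ F, A ⊆ range n) :
    #F * k ≤ #(∂ F) * (n - k + 1) := by
  classical
  refine card_mul_le_card_mul' (· ⊆ ·) (fun B hB => ?_) (fun c hc => ?_)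
  · -- k many subsets of B in shadow
    rw [← hsz B hB, ← card_image_of_injOn B.erase_injOn]
    refine card_le_card ?_
    simp_rw [image_subset_iff, mem_bipartiteBelow]
    exact fun a ha => ⟨erase_mem_shadow hB ha, erase_subset _ _⟩
  · -- at most n - k + 1 supersets of c in F
    obtain ⟨A₀, hA₀, hcA₀⟩ := exists_subset_of_mem_shadow hc
    have hcsub : c ⊆ range n := hcA₀.trans (hrg A₀ hA₀)
    have hccard : #c + 1 = k := by
      obtain ⟨A₁, hA₁, hc1, hcard⟩ := mem_shadow_iff_exists_mem_card_add_one.1 hc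
      rw [hsz A₁ hA₁] at hcard
      omega
    calc #(F.bipartiteAbove (· ⊆ ·) c)
        ≤ #((range n \ c).powersetCard 1) := by
          refine card_le_card_of_injOn (fun A => A \ c) (fun A hA => ?_) ?_
          · rw [mem_coe, mem_bipartiteAbove] at hA
            rw [mem_coe, mem_powersetCard]
            refine ⟨sdiff_subset_sdiff (hrg A hA.1) le_rfl, ?_⟩
            rw [card_sdiff_of_subset hA.2, hsz A hA.1]
            omega
          · intro A hA A' hA' hEq
            rw [mem_coe, mem_bipartiteAbove] at hA hA'
            dsimp only at hEq
            calc A = c ∪ (A \ c) := (union_sdiff_of_subset hA.2).symm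
              _ = c ∪ (A' \ c) := by rw [hEq]
              _ = A' := union_sdiff_of_subset hA'.2
      _ = n - k + 1 := by
          rw [card_powersetCard, Nat.choose_one_right, card_sdiff_of_subset hcsub, card_range]
          have hkn : k ≤ n := by
            have h := card_le_card (hrg A₀ hA₀)
            rw [card_range, hsz A₀ hA₀] at h
            exact h
          omega

/-- Iterated LYM chain: `#(∂^[j] F) * C(n,k) ≥ #F * C(n, k - j)`. -/
lemma lym_chain (hsz : ∀ A ∈ F, #A = k) (hrg : ∀ A ∈ F, A ⊆ range n) (hkn : k ≤ n) :
    ∀ j, j ≤ k → #F * (n.choose (k - j)) ≤ #(∂^[j] F) * n.choose k := by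
  intro j
  induction j with
  | zero => intro _; simp [Nat.mul_comm]
  | succ j ih =>
    intro hjk
    have hj : j ≤ k := by omega
    have IH := ih hj
    -- shadow levels
    have hsz' : ∀ A ∈ ∂^[j] F, #A = k - j := by
      intro A hA
      obtain ⟨s, hs, hts, hcard⟩ := mem_shadow_iterate_iff_exists_sdiff.1 hA
      have := card_sdiff_of_subset hts
      have := card_le_card hts
      have := hsz s hs
      omega
    have hrg' : ∀ A ∈ ∂^[j] F, A ⊆ range n := by
      intro A hA
      obtain ⟨s, hs, hts, -⟩ := mem_shadow_iterate_iff_exists_sdiff.1 hA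
      exact hts.trans (hrg s hs)
    have hloc : #(∂^[j] F) * (k - j) ≤ #(∂ (∂^[j] F)) * (n - (k - j) + 1) :=
      local_lym_range (by omega) hsz' hrg'
    rw [← Function.iterate_succ_apply' shadow] at hloc
    -- choose identity : C(n, k-j) * (k-j) = C(n, k-j-1) * (n - (k-j-1))
    have hid : n.choose (k - j) * (k - j) = n.choose (k - (j+1)) * (n - (k - (j+1))) := by
      have h1 : k - j = (k - (j+1)) + 1 := by omega
      rw [h1, Nat.choose_succ_right_eq]
    have hpos : 0 < n - (k - (j+1)) := by omega
    -- combine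
    have step1 : #F * (n.choose (k - j) * (k - j)) ≤ #(∂^[j] F) * (k - j) * n.choose k := by
      calc #F * (n.choose (k - j) * (k - j)) = #F * n.choose (k - j) * (k - j) := by ring
        _ ≤ #(∂^[j] F) * n.choose k * (k - j) := Nat.mul_le_mul_right _ IH
        _ = #(∂^[j] F) * (k - j) * n.choose k := by ring
    have step2 : #(∂^[j] F) * (k - j) * n.choose k ≤
        #(∂^[j+1] F) * (n - (k - j) + 1) * n.choose k := Nat.mul_le_mul_right _ hloc
    have h3 : n - (k - j) + 1 = n - (k - (j+1)) := by omega
    rw [h3] at step2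
    have : #F * (n.choose (k - (j+1)) * (n - (k - (j+1)))) ≤
        #(∂^[j+1] F) * (n - (k - (j+1))) * n.choose k := by
      rw [← hid]; exact step1.trans step2
    have := this
    rw [show #F * (n.choose (k - (j+1)) * (n - (k - (j+1)))) =
        #F * n.choose (k - (j+1)) * (n - (k - (j+1))) by ring,
      show #(∂^[j+1] F) * (n - (k - (j+1))) * n.choose k =
        #(∂^[j+1] F) * n.choose k * (n - (k - (j+1))) by ring] at this
    exact Nat.le_of_mul_le_mul_right this hpos

lemma choose_mono_half {N c d : ℕ} (hcd : c ≤ d) (hd : 2 * d ≤ N) :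
    N.choose c ≤ N.choose d := by
  induction d with
  | zero => simp_all
  | succ d ih =>
    rcases Nat.lt_or_ge c (d+1) with h | h
    · have h1 : N.choose c ≤ N.choose d := ih (by omega) (by omega)
      refine h1.trans ?_
      exact Nat.choose_le_succ_of_lt_half_left (by omega)
    · have : c = d + 1 := by omega
      rw [this]

lemma choose_anti_pair {N a b : ℕ} (hab : a ≤ b) (hN : N ≤ a + b) (hbN : b ≤ N) :
    N.choose b ≤ N.choose a := by
  rcases le_or_gt (2 * a) N with h | h
  · -- use symmetry on b
    have hsym : N.choose b = N.choose (N - b) := (Nat.choose_symm hbN).symm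
    rw [hsym]
    exact choose_mono_half (by omega) h
  · have hsyma : N.choose a = N.choose (N - a) := (Nat.choose_symm (by omega)).symm
    have hsymb : N.choose b = N.choose (N - b) := (Nat.choose_symm hbN).symm
    rw [hsyma, hsymb]
    exact choose_mono_half (by omega) (by omega)

/-- **Katona's intersecting shadow theorem** (ratio form):
for a `k`-uniform `t`-intersecting family, `#F * k ≤ #(∂^[t-1] F) * (k - t + 1)`. -/
theorem shadow_ratio :
    ∀ n k t (F : Finset (Finset ℕ)), 1 ≤ t → t ≤ k →
      (∀ A ∈ F, #A = k) → (∀ A ∈ F, A ⊆ range n) → TInt t F →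
      #F * k ≤ #(∂^[t-1] F) * (k - t + 1) := by
  intro n
  induction n using Nat.strong_induction_on with
  | _ n IH =>
    intro k t F ht htk hsz hrg hint
    rcases F.eq_empty_or_nonempty with rfl | ⟨A₀, hA₀⟩
    · simp
    have hkn : k ≤ n := by
      have h := card_le_card (hrg A₀ hA₀)
      rw [card_range, hsz A₀ hA₀] at h
      exact h
    by_cases hbase : n + t ≤ 2 * k
    · -- base case : LYM chain
      have hchain := lym_chain hsz hrg hkn (t-1) (by omega)
      have hkt : k - (t-1) = k - t + 1 := by omega
      rw [hkt] at hchain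
      have hn1 : 1 ≤ n := by omega
      have e1 : n.choose (k - t + 1) * (k - t + 1) = n * (n-1).choose (k - t) := by
        have h := Nat.add_one_mul_choose_eq (n-1) (k-t)
        rw [Nat.sub_add_cancel hn1] at h
        exact h.symm
      have e2 : n.choose k * k = n * (n-1).choose (k-1) := by
        have h := Nat.add_one_mul_choose_eq (n-1) (k-1)
        rw [Nat.sub_add_cancel hn1, Nat.sub_add_cancel (by omega : 1 ≤ k)] at h
        exact h.symm
      have hcmp : (n-1).choose (k-1) ≤ (n-1).choose (k-t) :=
        choose_anti_pair (by omega) (by omega) (by omega)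
      have hpos : 0 < n.choose k := Nat.choose_pos hkn
      refine Nat.le_of_mul_le_mul_right ?_ hpos
      calc #F * k * n.choose k = #F * (n.choose k * k) := by ring
        _ = #F * (n * (n-1).choose (k-1)) := by rw [e2]
        _ ≤ #F * (n * (n-1).choose (k-t)) := by
            exact Nat.mul_le_mul_left _ (Nat.mul_le_mul_left _ hcmp)
        _ = #F * (n.choose (k - t + 1) * (k - t + 1)) := by rw [e1]
        _ = #F * n.choose (k - t + 1) * (k - t + 1) := by ring
        _ ≤ #(∂^[t-1] F) * n.choose k * (k - t + 1) := Nat.mul_le_mul_right _ hchain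
        _ = #(∂^[t-1] F) * (k - t + 1) * n.choose k := by ring
    · -- inductive case
      push_neg at hbase
      have hn2 : k + 1 ≤ n := by omega
      set m := n - 1 with hm_def
      have hmn : m ∈ range n := mem_range.2 (by omega)
      obtain ⟨G, hGint, hGsz, hGrg, hGcard, hGsh, hGcomp⟩ :=
        exists_compressed m n k t hmn (fm F) F le_rfl hint hsz hrg
      set G₀ := G.filter (fun A => m ∉ A) with hG₀_def
      set G₁ := (G.filter (fun A => m ∈ A)).image (fun A => A.erase m) with hG₁_def
      -- facts about G₁ members
      have hG₁mem : ∀ B ∈ G₁, m ∉ B ∧ insert m B ∈ G ∧ #B = k - 1 ∧ B ⊆ range m := by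
        intro B hB
        rw [hG₁_def, mem_image] at hB
        obtain ⟨A, hA, rfl⟩ := hB
        rw [mem_filter] at hA
        refine ⟨notMem_erase _ _, ?_, ?_, ?_⟩
        · rw [insert_erase hA.2]; exact hA.1
        · rw [card_erase_of_mem hA.2, hGsz A hA.1]
        · intro x hx
          rw [mem_erase] at hx
          have hxn := mem_range.1 (hGrg A hA.1 hx.2)
          have hxm : x ≠ m := hx.1
          rw [mem_range]
          omega
      -- G₀ facts
      have hG₀sub : G₀ ⊆ G := filter_subset _ _
      have hG₀int : TInt t G₀ := fun A hA B hB => hGint A (hG₀sub hA) B (hG₀sub hB)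
      have hG₀sz : ∀ A ∈ G₀, #A = k := fun A hA => hGsz A (hG₀sub hA)
      have hG₀rg : ∀ A ∈ G₀, A ⊆ range m := by
        intro A hA x hx
        rw [hG₀_def, mem_filter] at hA
        have h1 := mem_range.1 (hGrg A hA.1 hx)
        have h2 : x ≠ m := fun h => hA.2 (h ▸ hx)
        rw [mem_range]; omega
      -- G₁ is t-intersecting
      have hG₁int : TInt t G₁ := by
        intro B hB B' hB'
        obtain ⟨hmB, hABmem, hBcard, hBrg⟩ := hG₁mem B hB
        obtain ⟨hmB', hABmem', hBcard', hBrg'⟩ := hG₁mem B' hB'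
        by_contra hlt
        push_neg at hlt
        have hii : insert m B ∩ insert m B' = insert m (B ∩ B') := by
          ext x
          simp only [mem_inter, mem_insert]
          tauto
        have h1 := hGint _ hABmem _ hABmem'
        rw [hii, card_insert_of_notMem (fun h => hmB (mem_inter.1 h).1)] at h1
        have hBB' : #(B ∩ B') = t - 1 := by omega
        have hcup : #(B ∪ B') + #(B ∩ B') = #B + #B' := card_union_add_card_inter B B'
        have hculec : #(B ∪ B') < m := by omega
        have hsubu : B ∪ B' ⊆ range m := union_subset hBrg hBrg'
        have hex : ∃ x ∈ range m, x ∉ B ∪ B' := by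
          by_contra hno
          push_neg at hno
          have : range m ⊆ B ∪ B' := fun x hx => hno x hx
          have := card_le_card this
          rw [card_range] at this
          omega
        obtain ⟨i, hi, hiBB⟩ := hex
        rw [mem_union] at hiBB
        push_neg at hiBB
        have him : i < m := mem_range.1 hi
        have hic := hGcomp i him
        have hiA : i ∉ insert m B := by
          rw [mem_insert]; push_neg; exact ⟨by omega, hiBB.1⟩
        have hmA : m ∈ insert m B := mem_insert_self _ _
        have hcompeq : UV.compress {i} {m} (insert m B) = insert i B := by
          rw [compress_eq_of (by omega) hiA hmA, erase_insert hmB]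
        have hmemc : insert i B ∈ G := by
          have h := UV.compress_mem_compression (u := ({i} : Finset ℕ))
            (v := ({m} : Finset ℕ)) hABmem
          rw [hcompeq, hic.eq] at h
          exact h
        have h2 := hGint _ hmemc _ hABmem'
        have he : insert i B ∩ insert m B' = B ∩ B' := by
          ext x
          simp only [mem_inter, mem_insert]
          constructor
          · rintro ⟨rfl | hxB, rfl | hxB'⟩
            · omega
            · exact absurd hxB' hiBB.2
            · exact absurd hxB hmB
            · exact ⟨hxB, hxB'⟩
          · rintro ⟨hxB, hxB'⟩
            exact ⟨Or.inr hxB, Or.inr hxB'⟩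
        rw [he] at h2
        omega
      -- cardinalities
      have hG₁card : #G₁ = #(G.filter (fun A => m ∈ A)) := by
        rw [hG₁_def]
        refine card_image_of_injOn ?_
        intro A hA A' hA' hEq
        rw [mem_coe, mem_filter] at hA hA'
        dsimp only at hEq
        calc A = insert m (A.erase m) := (insert_erase hA.2).symm
          _ = insert m (A'.erase m) := by rw [hEq]
          _ = A' := insert_erase hA'.2
      have hGsplit : #G = #G₀ + #G₁ := by
        rw [hG₁card, hG₀_def]
        rw [← card_filter_add_card_filter_not (p := fun A => m ∈ A) (s := G)]
        omega
      -- shadow decomposition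
      set X := ∂^[t-1] G with hX_def
      have hY₀ : ∂^[t-1] G₀ ⊆ X := by
        exact (shadow_monotone.iterate (t-1)) hG₀sub
      have hY₀m : ∀ S ∈ ∂^[t-1] G₀, m ∉ S := by
        intro S hS
        obtain ⟨A, hA, hSA, -⟩ := mem_shadow_iterate_iff_exists_sdiff.1 hS
        rw [hG₀_def, mem_filter] at hA
        exact fun h => hA.2 (hSA h)
      have hY₁ : ∀ S ∈ ∂^[t-1] G₁, m ∉ S ∧ insert m S ∈ X := by
        intro S hS
        obtain ⟨B, hB, hSB, hcard⟩ := mem_shadow_iterate_iff_exists_sdiff.1 hS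
        obtain ⟨hmB, hABmem, hBcard, hBrg⟩ := hG₁mem B hB
        have hmS : m ∉ S := fun h => hmB (hSB h)
        refine ⟨hmS, ?_⟩
        rw [hX_def, mem_shadow_iterate_iff_exists_sdiff]
        refine ⟨insert m B, hABmem, insert_subset_insert _ hSB, ?_⟩
        have : insert m B \ insert m S = B \ S := by
          ext x
          simp only [mem_sdiff, mem_insert]
          constructor
          · rintro ⟨rfl | hxB, hx⟩
            · exact absurd (Or.inl rfl) hx
            · push_neg at hx
              exact ⟨hxB, hx.2⟩
          · rintro ⟨hxB, hxS⟩
            have : x ≠ m := fun h => hmB (h ▸ hxB)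
            exact ⟨Or.inr hxB, by push_neg; exact ⟨this, hxS⟩⟩
        rw [this, hcard]
      have hXsplit : #(∂^[t-1] G₀) + #(∂^[t-1] G₁) ≤ #X := by
        have himg : #((∂^[t-1] G₁).image (insert m)) = #(∂^[t-1] G₁) := by
          refine card_image_of_injOn ?_
          intro S hS S' hS' hEq
          have h1 := (hY₁ S hS).1
          have h2 := (hY₁ S' hS').1
          calc S = (insert m S).erase m := by rw [erase_insert h1]
            _ = (insert m S').erase m := by rw [hEq]
            _ = S' := erase_insert h2
        have hsub : ∂^[t-1] G₀ ∪ (∂^[t-1] G₁).image (insert m) ⊆ X := by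
          refine union_subset hY₀ ?_
          intro y hy
          rw [mem_image] at hy
          obtain ⟨S, hS, rfl⟩ := hy
          exact (hY₁ S hS).2
        have hdisj : Disjoint (∂^[t-1] G₀) ((∂^[t-1] G₁).image (insert m)) := by
          rw [disjoint_left]
          intro y hy hy'
          rw [mem_image] at hy'
          obtain ⟨S, hS, rfl⟩ := hy'
          exact hY₀m _ hy (mem_insert_self _ _)
        calc #(∂^[t-1] G₀) + #(∂^[t-1] G₁)
            = #(∂^[t-1] G₀ ∪ (∂^[t-1] G₁).image (insert m)) := by
              rw [card_union_of_disjoint hdisj, himg]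
          _ ≤ #X := card_le_card hsub
      -- apply induction hypotheses
      have hIH₀ : #G₀ * k ≤ #(∂^[t-1] G₀) * (k - t + 1) :=
        IH m (by omega) k t G₀ ht htk hG₀sz hG₀rg hG₀int
      have hIH₁ : #G₁ * k ≤ #(∂^[t-1] G₁) * (k - t + 1) := by
        rcases G₁.eq_empty_or_nonempty with h | ⟨B₀, hB₀⟩
        · rw [h]
          rw [shadow_iterate_empty, card_empty]
          omega
        have htk1 : t ≤ k - 1 := by
          have h := hG₁int B₀ hB₀ B₀ hB₀
          rw [inter_self] at h
          have := (hG₁mem B₀ hB₀).2.2.1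
          omega
        have hIH := IH m (by omega) (k-1) t G₁ ht htk1
          (fun B hB => (hG₁mem B hB).2.2.1) (fun B hB => (hG₁mem B hB).2.2.2) hG₁int
        obtain ⟨t', rfl⟩ : ∃ t', t = t' + 1 := ⟨t - 1, by omega⟩
        obtain ⟨q, hq⟩ : ∃ q, k = t' + 1 + q := ⟨k - (t'+1), by omega⟩
        have hq1 : 1 ≤ q := by omega
        subst hq
        have hsimp1 : t' + 1 + q - 1 - (t'+1) + 1 = q := by omega
        have hsimp2 : t' + 1 + q - (t'+1) + 1 = q + 1 := by omega
        have hsimp3 : t' + 1 - 1 = t' := by omega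
        rw [hsimp3] at hIH ⊢
        rw [hsimp1] at hIH
        rw [hsimp2]
        set a := #G₁
        set X₁ := #(∂^[t'] G₁)
        have hIH' : a * (t' + 1 + q - 1) ≤ X₁ * q := hIH
        have hkk : t' + 1 + q - 1 = t' + q := by omega
        rw [hkk] at hIH'
        refine Nat.le_of_mul_le_mul_right ?_ (show 0 < q by omega)
        have e : a * (t' + 1 + q) * q + a * t' = a * (t' + q) * (q + 1) := by ring
        calc a * (t' + 1 + q) * q ≤ a * (t' + q) * (q + 1) := Nat.le.intro e
          _ ≤ X₁ * q * (q + 1) := Nat.mul_le_mul_right _ hIH'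
          _ = X₁ * (q + 1) * q := by ring
      -- put everything together
      calc #F * k = #G * k := by rw [hGcard]
        _ = #G₀ * k + #G₁ * k := by rw [hGsplit]; ring
        _ ≤ #(∂^[t-1] G₀) * (k - t + 1) + #(∂^[t-1] G₁) * (k - t + 1) :=
            Nat.add_le_add hIH₀ hIH₁
        _ = (#(∂^[t-1] G₀) + #(∂^[t-1] G₁)) * (k - t + 1) := by ring
        _ ≤ #X * (k - t + 1) := Nat.mul_le_mul_right _ hXsplit
        _ ≤ #(∂^[t-1] F) * (k - t + 1) := Nat.mul_le_mul_right _ (hGsh (t-1))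

/-- `F` restricted to its level `k`. -/
def lvl (k : ℕ) (F : Finset (Finset ℕ)) : Finset (Finset ℕ) := F.filter (fun A => #A = k)

lemma lvl_sized : ∀ A ∈ lvl k F, #A = k := fun A hA => (mem_filter.1 hA).2

lemma lvl_subset : lvl k F ⊆ F := filter_subset _ _

/-- The "forbidden sets" at level `n+t-1-k` coming from level `k`. -/
lemma forbidden (hint : TInt t F) (hrg : ∀ A ∈ F, A ⊆ range n) (ht : 1 ≤ t) (htk : t ≤ k)
    (hkn : k ≤ n) :
    ∃ U : Finset (Finset ℕ), #(lvl k F) * k ≤ #U * (k - t + 1) ∧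
      U ⊆ powersetCard (n + t - 1 - k) (range n) ∧ ∀ C ∈ U, C ∉ F := by
  classical
  set X := ∂^[t-1] (lvl k F) with hX
  refine ⟨X.image (fun S => range n \ S), ?_, ?_, ?_⟩
  · -- ratio bound
    have h1 := shadow_ratio n k t (lvl k F) ht htk lvl_sized
      (fun A hA => hrg A (lvl_subset hA)) (fun A hA B hB => hint A (lvl_subset hA) B (lvl_subset hB))
    have h4 : #(X.image (fun S => range n \ S)) = #X := by
      refine card_image_of_injOn ?_
      intro S hS S' hS' hEq
      rw [mem_coe, hX] at hS hS'
      obtain ⟨A, hA, hSA, -⟩ := mem_shadow_iterate_iff_exists_sdiff.1 hS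
      obtain ⟨A', hA', hSA', -⟩ := mem_shadow_iterate_iff_exists_sdiff.1 hS'
      have hSr : S ⊆ range n := hSA.trans (hrg A (lvl_subset hA))
      have hSr' : S' ⊆ range n := hSA'.trans (hrg A' (lvl_subset hA'))
      dsimp only at hEq
      calc S = range n \ (range n \ S) := (Finset.sdiff_sdiff_eq_self hSr).symm
        _ = range n \ (range n \ S') := by rw [hEq]
        _ = S' := Finset.sdiff_sdiff_eq_self hSr'
    rw [← hX] at h1
    rw [h4]
    exact h1
  · -- image ⊆ powersetCard
    intro C hC
    rw [mem_image] at hC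
    obtain ⟨S, hS, rfl⟩ := hC
    obtain ⟨A, hA, hSA, hcard⟩ := mem_shadow_iterate_iff_exists_sdiff.1 hS
    have hSr : S ⊆ range n := hSA.trans (hrg A (lvl_subset hA))
    have hAk : #A = k := lvl_sized A hA
    have hScard : #S = k - (t-1) := by
      have h := card_sdiff_of_subset hSA
      have h2 := card_le_card hSA
      omega
    rw [mem_powersetCard]
    refine ⟨sdiff_subset, ?_⟩
    rw [card_sdiff_of_subset hSr, card_range, hScard]
    omega
  · -- forbidden
    intro C hC
    rw [mem_image] at hC
    obtain ⟨S, hS, rfl⟩ := hC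
    obtain ⟨A, hA, hSA, hcard⟩ := mem_shadow_iterate_iff_exists_sdiff.1 hS
    intro hCF
    have h := hint _ hCF A (lvl_subset hA)
    have he : (range n \ S) ∩ A = A \ S := by
      ext x
      simp only [mem_inter, mem_sdiff, mem_range]
      constructor
      · rintro ⟨⟨-, hxS⟩, hxA⟩; exact ⟨hxA, hxS⟩
      · rintro ⟨hxA, hxS⟩
        exact ⟨⟨mem_range.1 (hrg A (lvl_subset hA) hxA), hxS⟩, hxA⟩
    rw [he, hcard] at h
    omega

lemma pair_bound (hint : TInt t F) (hrg : ∀ A ∈ F, A ⊆ range n) (ht : 1 ≤ t) (htk : t ≤ k)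
    (hkn : k ≤ n) {m : ℕ} (hm : m = n + t - 1 - k) :
    #(lvl m F) + #(lvl k F) ≤ n.choose m := by
  obtain ⟨U, hU1, hU2, hU3⟩ := forbidden hint hrg ht htk hkn
  have hU1' : #(lvl k F) ≤ #U := by
    have h2 : #(lvl k F) * k ≤ #U * k := hU1.trans (Nat.mul_le_mul_left _ (by omega))
    exact Nat.le_of_mul_le_mul_right h2 (by omega)
  rw [← hm] at hU2
  have hdisj : Disjoint (lvl m F) U := by
    rw [disjoint_left]
    intro A hA hA'
    exact hU3 A hA' (lvl_subset hA)
  have hsub : lvl m F ∪ U ⊆ powersetCard m (range n) := by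
    refine union_subset ?_ hU2
    intro A hA
    rw [mem_powersetCard]
    exact ⟨hrg A (lvl_subset hA), lvl_sized A hA⟩
  have := card_le_card hsub
  rw [card_union_of_disjoint hdisj, card_powersetCard, card_range] at this
  omega

lemma mid_bound (hint : TInt t F) (hrg : ∀ A ∈ F, A ⊆ range n) (ht : 1 ≤ t) (htk : t ≤ k)
    (hmid : n + t = 2 * k + 1) :
    #(lvl k F) ≤ (n-1).choose k := by
  have hkn : k ≤ n := by omega
  obtain ⟨U, hU1, hU2, hU3⟩ := forbidden hint hrg ht htk hkn
  have hm : n + t - 1 - k = k := by omega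
  rw [hm] at hU2
  have hdisj : Disjoint (lvl k F) U := by
    rw [disjoint_left]
    intro A hA hA'
    exact hU3 A hA' (lvl_subset hA)
  have hsub : lvl k F ∪ U ⊆ powersetCard k (range n) := by
    refine union_subset ?_ hU2
    intro A hA
    rw [mem_powersetCard]
    exact ⟨hrg A (lvl_subset hA), lvl_sized A hA⟩
  have hcc := card_le_card hsub
  rw [card_union_of_disjoint hdisj, card_powersetCard, card_range] at hcc
  -- combine: #lvl * n ≤ C(n,k) * (n - k) = n * C(n-1,k)
  have hstep : #(lvl k F) * n ≤ n.choose k * (k - t + 1) := by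
    have e : #(lvl k F) * n = #(lvl k F) * k + #(lvl k F) * (k - t + 1) := by
      have : n = k + (k - t + 1) := by omega
      rw [this]; ring
    calc #(lvl k F) * n = #(lvl k F) * k + #(lvl k F) * (k - t + 1) := e
      _ ≤ #U * (k - t + 1) + #(lvl k F) * (k - t + 1) := by
          exact Nat.add_le_add_right hU1 _
      _ = (#U + #(lvl k F)) * (k - t + 1) := by ring
      _ ≤ n.choose k * (k - t + 1) := Nat.mul_le_mul_right _ (by omega)
  have hid : n.choose k * (k - t + 1) = n * (n-1).choose k := by
    have h := Nat.add_one_mul_choose_eq (n-1) k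
    rw [Nat.sub_add_cancel (by omega : 1 ≤ n)] at h
    -- h : n * (n-1).choose k = n.choose (k+1) * (k+1)
    have h2 := Nat.choose_succ_right_eq n k
    -- h2 : n.choose (k+1) * (k+1) = n.choose k * (n - k)
    have h3 : n - k = k - t + 1 := by omega
    rw [h2, h3] at h
    exact h.symm
  rw [hid] at hstep
  have hn1 : 0 < n := by omega
  calc #(lvl k F) = #(lvl k F) * n / n := by rw [Nat.mul_div_cancel _ hn1]
    _ ≤ n * (n-1).choose k / n := Nat.div_le_div_right hstep
    _ = (n-1).choose k := by rw [Nat.mul_div_cancel_left _ hn1]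

/-- The size of the Katona family. -/
def kat (n t : ℕ) : ℕ :=
  (∑ j ∈ Icc ((n+t+1)/2) n, n.choose j) +
    (if (n + t) % 2 = 0 then 0 else (n-1).choose ((n+t-1)/2))

/-- The cardinality version of **Katona's intersection theorem**, over ground set `range n`. -/
theorem katona_nat (ht : 1 ≤ t) (htn : t ≤ n) (hint : TInt t F)
    (hrg : ∀ A ∈ F, A ⊆ range n) : #F ≤ kat n t := by
  classical
  set h := (n+t+1)/2 with hh
  have htot : #F = ∑ k ∈ range (n+1), #(lvl k F) := by
    refine card_eq_sum_card_fiberwise (fun A hA => ?_)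
    rw [mem_coe, mem_range]
    have hc := card_le_card (hrg A hA)
    rw [card_range] at hc
    omega
  have hzero : ∀ k, k < t → #(lvl k F) = 0 := by
    intro k hk
    rw [card_eq_zero, eq_empty_iff_forall_notMem]
    intro A hA
    have h1 := hint A (lvl_subset hA) A (lvl_subset hA)
    rw [inter_self, lvl_sized A hA] at h1
    omega
  have hgn : #(lvl n F) ≤ 1 := by
    refine card_le_one.2 (fun A hA B hB => ?_)
    have hA1 : A = range n := eq_of_subset_of_card_le (hrg A (lvl_subset hA))
      (by rw [card_range, lvl_sized A hA])
    have hB1 : B = range n := eq_of_subset_of_card_le (hrg B (lvl_subset hB))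
      (by rw [card_range, lvl_sized B hB])
    rw [hA1, hB1]
  have hIcc : ∑ k ∈ range (n+1), #(lvl k F) = ∑ k ∈ Ico t (n+1), #(lvl k F) := by
    refine (sum_subset ?_ ?_).symm
    · intro x hx
      rw [mem_Ico] at hx
      rw [mem_range]
      omega
    · intro x hx hx'
      rw [mem_range] at hx
      rw [mem_Ico] at hx'
      exact hzero x (by omega)
  have hgnn : ∑ k ∈ Ico n (n+1), #(lvl k F) = #(lvl n F) := by
    rw [Nat.Ico_succ_singleton, sum_singleton]
  by_cases hpar : (n + t) % 2 = 0
  · -- even case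
    have hhe : 2 * h = n + t := by omega
    have hth : t ≤ h := by omega
    have hhn : h ≤ n := by omega
    have e1 : (∑ k ∈ Ico t h, #(lvl k F)) + (∑ k ∈ Ico h (n+1), #(lvl k F))
        = ∑ k ∈ Ico t (n+1), #(lvl k F) :=
      sum_Ico_consecutive _ hth (by omega)
    have e2 : (∑ k ∈ Ico h n, #(lvl k F)) + (∑ k ∈ Ico n (n+1), #(lvl k F))
        = ∑ k ∈ Ico h (n+1), #(lvl k F) :=
      sum_Ico_consecutive _ (by omega) (by omega)
    have hre : ∑ k ∈ Ico t h, #(lvl k F) = ∑ jj ∈ Ico h n, #(lvl (n + t - 1 - jj) F) := by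
      refine sum_nbij' (fun k => n + t - 1 - k) (fun jj => n + t - 1 - jj) ?_ ?_ ?_ ?_ ?_
      · intro a ha
        simp only [mem_Ico] at ha ⊢
        omega
      · intro a ha
        simp only [mem_Ico] at ha ⊢
        omega
      · intro a ha
        simp only [mem_Ico] at ha
        omega
      · intro a ha
        simp only [mem_Ico] at ha
        omega
      · intro a ha
        simp only [mem_Ico] at ha
        have hx : n + t - 1 - (n + t - 1 - a) = a := by omega
        rw [hx]
    have hpairs : ∑ jj ∈ Ico h n, (#(lvl jj F) + #(lvl (n + t - 1 - jj) F))
        ≤ ∑ jj ∈ Ico h n, n.choose jj := by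
      refine sum_le_sum (fun jj hjj => ?_)
      rw [mem_Ico] at hjj
      refine pair_bound hint hrg ht ?_ ?_ ?_ <;> omega
    have hkat : kat n t = (∑ jj ∈ Ico h n, n.choose jj) + 1 := by
      rw [kat, if_pos hpar, ← hh]
      rw [← Finset.Ico_add_one_right_eq_Icc]
      rw [← sum_Ico_consecutive _ (by omega : h ≤ n) (by omega : n ≤ n+1)]
      rw [Nat.Ico_succ_singleton, sum_singleton, Nat.choose_self]
    calc #F = ∑ k ∈ Ico t (n+1), #(lvl k F) := by rw [htot, hIcc]
      _ = (∑ k ∈ Ico t h, #(lvl k F)) + ((∑ k ∈ Ico h n, #(lvl k F)) + #(lvl n F)) := by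
          rw [← e1, ← e2, hgnn]
      _ = (∑ jj ∈ Ico h n, (#(lvl jj F) + #(lvl (n + t - 1 - jj) F))) + #(lvl n F) := by
          rw [hre, sum_add_distrib]
          ring
      _ ≤ (∑ jj ∈ Ico h n, n.choose jj) + 1 := Nat.add_le_add hpairs hgn
      _ = kat n t := hkat.symm
  · -- odd case
    have hhe : 2 * h = n + t + 1 := by omega
    have hnt : t + 1 ≤ n := by omega
    set mid := h - 1 with hmid_def
    have hmid2 : 2 * mid = n + t - 1 := by omega
    have htmid : t ≤ mid := by omega
    have e1 : (∑ k ∈ Ico t mid, #(lvl k F)) + (∑ k ∈ Ico mid (n+1), #(lvl k F))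
        = ∑ k ∈ Ico t (n+1), #(lvl k F) :=
      sum_Ico_consecutive _ htmid (by omega)
    have e2 : (∑ k ∈ Ico mid h, #(lvl k F)) + (∑ k ∈ Ico h (n+1), #(lvl k F))
        = ∑ k ∈ Ico mid (n+1), #(lvl k F) :=
      sum_Ico_consecutive _ (by omega) (by omega)
    have e3 : (∑ k ∈ Ico h n, #(lvl k F)) + (∑ k ∈ Ico n (n+1), #(lvl k F))
        = ∑ k ∈ Ico h (n+1), #(lvl k F) :=
      sum_Ico_consecutive _ (by omega) (by omega)
    have emid : ∑ k ∈ Ico mid h, #(lvl k F) = #(lvl mid F) := by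
      have : h = mid + 1 := by omega
      rw [this, Nat.Ico_succ_singleton, sum_singleton]
    have hre : ∑ k ∈ Ico t mid, #(lvl k F) = ∑ jj ∈ Ico h n, #(lvl (n + t - 1 - jj) F) := by
      refine sum_nbij' (fun k => n + t - 1 - k) (fun jj => n + t - 1 - jj) ?_ ?_ ?_ ?_ ?_
      · intro a ha
        simp only [mem_Ico] at ha ⊢
        omega
      · intro a ha
        simp only [mem_Ico] at ha ⊢
        omega
      · intro a ha
        simp only [mem_Ico] at ha
        omega
      · intro a ha
        simp only [mem_Ico] at ha
        omega
      · intro a ha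
        simp only [mem_Ico] at ha
        have hx : n + t - 1 - (n + t - 1 - a) = a := by omega
        rw [hx]
    have hpairs : ∑ jj ∈ Ico h n, (#(lvl jj F) + #(lvl (n + t - 1 - jj) F))
        ≤ ∑ jj ∈ Ico h n, n.choose jj := by
      refine sum_le_sum (fun jj hjj => ?_)
      rw [mem_Ico] at hjj
      refine pair_bound hint hrg ht ?_ ?_ ?_ <;> omega
    have hmidb : #(lvl mid F) ≤ (n-1).choose mid :=
      mid_bound hint hrg ht htmid (by omega)
    have hkat : kat n t = (∑ jj ∈ Ico h n, n.choose jj) + 1 + (n-1).choose mid := by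
      rw [kat, if_neg hpar, ← hh]
      have : (n + t - 1) / 2 = mid := by omega
      rw [this]
      rw [← Finset.Ico_add_one_right_eq_Icc]
      rw [← sum_Ico_consecutive _ (by omega : h ≤ n) (by omega : n ≤ n+1)]
      rw [Nat.Ico_succ_singleton, sum_singleton, Nat.choose_self]
    calc #F = ∑ k ∈ Ico t (n+1), #(lvl k F) := by rw [htot, hIcc]
      _ = (∑ k ∈ Ico t mid, #(lvl k F)) + (#(lvl mid F) +
            ((∑ k ∈ Ico h n, #(lvl k F)) + #(lvl n F))) := by
          rw [← e1, ← e2, ← e3, emid, hgnn]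
      _ = (∑ jj ∈ Ico h n, (#(lvl jj F) + #(lvl (n + t - 1 - jj) F))) + #(lvl n F)
            + #(lvl mid F) := by
          rw [hre, sum_add_distrib]
          ring
      _ ≤ (∑ jj ∈ Ico h n, n.choose jj) + 1 + (n-1).choose mid := by
          exact Nat.add_le_add (Nat.add_le_add hpairs hgn) hmidb
      _ = kat n t := hkat.symm

lemma card_filter_card_eq (n j : ℕ) :
    #(univ.filter (fun A : Finset (Fin n) => #A = j)) = n.choose j := by
  have h1 : powersetCard j (univ : Finset (Fin n))
      = univ.filter (fun A : Finset (Fin n) => #A = j) := by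
    rw [powersetCard_eq_filter, powerset_univ]
  rw [← h1, card_powersetCard, card_univ, Fintype.card_fin]

lemma card_filter_le_card (n h : ℕ) (hn : h ≤ n) :
    #(univ.filter (fun A : Finset (Fin n) => h ≤ #A)) = ∑ j ∈ Icc h n, n.choose j := by
  have hmem : ∀ A ∈ univ.filter (fun A : Finset (Fin n) => h ≤ #A), #A ∈ Icc h n := by
    intro A hA
    rw [mem_filter] at hA
    rw [mem_Icc]
    refine ⟨hA.2, ?_⟩
    have := card_le_univ A
    rwa [Fintype.card_fin] at this
  rw [card_eq_sum_card_fiberwise hmem]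
  refine sum_congr rfl (fun j hj => ?_)
  rw [mem_Icc] at hj
  rw [filter_filter]
  rw [← card_filter_card_eq n j]
  congr 1
  refine filter_congr (fun A _ => ?_)
  constructor
  · rintro ⟨-, h2⟩; exact h2
  · rintro rfl2
    exact ⟨by omega, rfl2⟩

lemma kat_fin (ht : 1 ≤ t) (htn : t ≤ n) : #(katonaFamily n t) = kat n t := by
  by_cases hpar : (n + t) % 2 = 0
  · rw [katonaFamily, if_pos hpar, kat, if_pos hpar]
    have he : (n + t) / 2 = (n + t + 1) / 2 := by omega
    rw [← he, card_filter_le_card n _ (by omega)]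
    omega
  · rw [katonaFamily, if_neg hpar, kat, if_neg hpar]
    set h := (n + t + 1) / 2 with hh
    set mid := (n + t - 1) / 2 with hmid
    have hmh : mid + 1 = h := by omega
    have hn2 : t + 1 ≤ n := by omega
    -- split the filter
    have hsplit : (univ.filter (fun A : Finset (Fin n) =>
        h ≤ #A ∨ (#A = mid ∧ ∀ x ∈ A, (x : ℕ) < n - 1)))
        = (univ.filter (fun A : Finset (Fin n) => h ≤ #A)) ∪
          (univ.filter (fun A : Finset (Fin n) => #A = mid ∧ ∀ x ∈ A, (x : ℕ) < n - 1)) := by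
      rw [filter_or]
    rw [hsplit, card_union_of_disjoint]
    · congr 1
      · exact card_filter_le_card n h (by omega)
      · -- the edge part
        set S := univ.filter (fun x : Fin n => (x : ℕ) < n - 1) with hS
        have hScard : #S = n - 1 := by
          have h1 := card_filter_add_card_filter_not
            (s := (univ : Finset (Fin n))) (p := fun x : Fin n => (x : ℕ) < n - 1)
          have h2 : univ.filter (fun x : Fin n => ¬ ((x : ℕ) < n - 1))
              = {(⟨n-1, by omega⟩ : Fin n)} := by
            ext x
            simp only [mem_filter, mem_univ, true_and, mem_singleton, not_lt]
            constructor
            · intro hx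
              have h3 := x.isLt
              refine Fin.ext ?_
              simp only [Fin.val_mk]
              omega
            · rintro rfl
              simp
          rw [h2, card_singleton, card_univ, Fintype.card_fin] at h1
          rw [← hS] at h1
          omega
        have hedge : univ.filter (fun A : Finset (Fin n) => #A = mid ∧ ∀ x ∈ A, (x : ℕ) < n - 1)
            = powersetCard mid S := by
          ext A
          simp only [mem_filter, mem_univ, true_and, mem_powersetCard, hS]
          constructor
          · rintro ⟨h1, h2⟩
            exact ⟨fun x hx => mem_filter.2 ⟨mem_univ _, h2 x hx⟩, h1⟩
          · rintro ⟨h1, h2⟩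
            exact ⟨h2, fun x hx => (mem_filter.1 (h1 hx)).2⟩
        rw [hedge, card_powersetCard, hScard]
    · rw [disjoint_left]
      intro A hA hA'
      rw [mem_filter] at hA hA'
      omega

theorem katona_fin (ht : 1 ≤ t) (htn : t ≤ n) (F : Finset (Finset (Fin n)))
    (hint : ∀ A ∈ F, ∀ B ∈ F, t ≤ #(A ∩ B)) : #F ≤ #(katonaFamily n t) := by
  classical
  set φ : Finset (Fin n) → Finset ℕ := fun A => A.image (fun x : Fin n => (x : ℕ)) with hφ
  have hφinj : Function.Injective φ := by
    intro A B h
    exact Finset.image_injective Fin.val_injective h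
  set F' := F.image φ with hF'
  have hcard : #F' = #F := card_image_of_injective F hφinj
  have hint' : TInt t F' := by
    intro A' hA' B' hB'
    rw [hF', mem_image] at hA' hB'
    obtain ⟨A, hA, rfl⟩ := hA'
    obtain ⟨B, hB, rfl⟩ := hB'
    have : φ A ∩ φ B = φ (A ∩ B) := by
      rw [hφ]
      exact (image_inter A B Fin.val_injective).symm
    rw [this, hφ, card_image_of_injective _ Fin.val_injective]
    exact hint A hA B hB
  have hrg' : ∀ A ∈ F', A ⊆ range n := by
    intro A' hA'
    rw [hF', mem_image] at hA'
    obtain ⟨A, hA, rfl⟩ := hA'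
    intro x hx
    rw [hφ] at hx
    simp only [mem_image] at hx
    obtain ⟨y, hy, rfl⟩ := hx
    rw [mem_range]
    exact y.isLt
  calc #F = #F' := hcard.symm
    _ ≤ kat n t := katona_nat ht htn hint' hrg'
    _ = #(katonaFamily n t) := (kat_fin ht htn).symm

lemma kat_mem_lower {n t : ℕ} (ht : 1 ≤ t) (htn : t ≤ n) :
    ∀ A ∈ katonaFamily n t, (n + t - 1) / 2 ≤ #A := by
  intro A hA
  rw [katonaFamily] at hA
  by_cases hpar : (n + t) % 2 = 0
  · rw [if_pos hpar, mem_filter] at hA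
    omega
  · rw [if_neg hpar, mem_filter] at hA
    rcases hA.2 with h | ⟨h, -⟩ <;> omega

lemma kat_mem_upper {n t : ℕ} (ht : 1 ≤ t) (htn : t ≤ n) (A : Finset (Fin n))
    (hA : (n + t - 1) / 2 < #A) : A ∈ katonaFamily n t := by
  rw [katonaFamily]
  by_cases hpar : (n + t) % 2 = 0
  · rw [if_pos hpar, mem_filter]
    exact ⟨mem_univ _, by omega⟩
  · rw [if_neg hpar, mem_filter]
    exact ⟨mem_univ _, Or.inl (by omega)⟩

lemma count_le {n t : ℕ} (ht : 1 ≤ t) (htn : t ≤ n) (F : Finset (Finset (Fin n)))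
    (hint : ∀ A ∈ F, ∀ B ∈ F, t ≤ #(A ∩ B)) (j : ℕ) :
    #(F.filter (fun A => j < #A)) ≤ #((katonaFamily n t).filter (fun A => j < #A)) := by
  by_cases hj : j < (n + t - 1) / 2
  · -- filter of K is all of K
    have hK : (katonaFamily n t).filter (fun A => j < #A) = katonaFamily n t := by
      refine filter_true_of_mem (fun A hA => ?_)
      have := kat_mem_lower ht htn A hA
      omega
    rw [hK]
    calc #(F.filter (fun A => j < #A)) ≤ #F := card_le_card (filter_subset _ _)
      _ ≤ #(katonaFamily n t) := katona_fin ht htn F hint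
  · refine card_le_card (fun A hA => ?_)
    rw [mem_filter] at hA ⊢
    exact ⟨kat_mem_upper ht htn A (by omega), hA.2⟩

/-- Abel-summation style identity for the biased measure. -/
lemma biased_eq {n : ℕ} {p : ℝ} (𝒢 : Finset (Finset (Fin n))) :
    biasedMeasure n p 𝒢 =
      (p ^ 0 * (1-p) ^ n) * #𝒢 +
      ∑ j ∈ range n, ((p ^ (j+1) * (1-p) ^ (n-(j+1)) - p ^ j * (1-p) ^ (n-j)) *
        #(𝒢.filter (fun A => j < #A))) := by
  classical
  set f : ℕ → ℝ := fun k => p ^ k * (1-p) ^ (n-k) with hf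
  have hsingle : ∀ A : Finset (Fin n), A ∈ 𝒢 →
      f (#A) = f 0 + ∑ j ∈ range n, (if j < #A then f (j+1) - f j else 0) := by
    intro A _
    have hcard : #A ≤ n := by
      have := card_le_univ A
      rwa [Fintype.card_fin] at this
    have h1 : ∑ j ∈ range n, (if j < #A then f (j+1) - f j else 0)
        = ∑ j ∈ range #A, (if j < #A then f (j+1) - f j else 0) := by
      refine (sum_subset (by intro x hx; rw [mem_range] at hx ⊢; omega) ?_).symm
      intro x hx hx'
      rw [mem_range] at hx hx'
      rw [if_neg (by omega)]
    have h2 : ∑ j ∈ range #A, (if j < #A then f (j+1) - f j else 0)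
        = ∑ j ∈ range #A, (f (j+1) - f j) := by
      refine sum_congr rfl (fun j hj => ?_)
      rw [mem_range] at hj
      rw [if_pos hj]
    rw [h1, h2, sum_range_sub f]
    ring
  have hlhs : biasedMeasure n p 𝒢 = ∑ A ∈ 𝒢, f (#A) := rfl
  rw [hlhs, sum_congr rfl hsingle, sum_add_distrib, sum_const]
  congr 1
  · rw [hf]
    simp only
    rw [nsmul_eq_mul]
    norm_num
    ring
  · rw [sum_comm]
    refine sum_congr rfl (fun j _ => ?_)
    rw [← sum_filter]
    rw [sum_const, nsmul_eq_mul]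
    ring

end Katona

theorem stmt12 (n t : ℕ) (ht : 1 ≤ t) (htn : t ≤ n) (p : ℝ)
    (hp : p ∈ Set.Ico (1 / 2 : ℝ) 1)
    (F : Finset (Finset (Fin n)))
    (hint : ∀ A ∈ F, ∀ B ∈ F, t ≤ (A ∩ B).card) :
    biasedMeasure n p F ≤ biasedMeasure n p (katonaFamily n t) := by
  obtain ⟨hp1, hp2⟩ := hp
  have hp0 : (0:ℝ) ≤ p := by linarith
  have hq0 : (0:ℝ) ≤ 1 - p := by linarith
  have hqp : (1:ℝ) - p ≤ p := by linarith
  rw [Katona.biased_eq F, Katona.biased_eq (katonaFamily n t)]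
  refine add_le_add ?_ ?_
  · refine mul_le_mul_of_nonneg_left ?_ (by positivity)
    exact_mod_cast Katona.katona_fin ht htn F hint
  · refine sum_le_sum (fun j hj => ?_)
    rw [mem_range] at hj
    have hd : (0:ℝ) ≤ p ^ (j+1) * (1-p) ^ (n-(j+1)) - p ^ j * (1-p) ^ (n-j) := by
      have h1 : n - j = (n - (j+1)) + 1 := by omega
      have hee : (1-p) ^ (n - j) = (1-p) ^ (n-(j+1)) * (1-p) := by rw [h1, pow_succ]
      have hle : p ^ j * ((1-p) ^ (n-(j+1)) * (1-p)) ≤ p ^ j * ((1-p) ^ (n-(j+1)) * p) := by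
        refine mul_le_mul_of_nonneg_left ?_ (pow_nonneg hp0 _)
        exact mul_le_mul_of_nonneg_left hqp (pow_nonneg hq0 _)
      have he : p ^ j * ((1-p) ^ (n-(j+1)) * p) = p ^ (j+1) * (1-p) ^ (n-(j+1)) := by ring
      rw [hee, mul_comm (p ^ j) ((1-p) ^ (n-(j+1)) * (1-p))]
      nlinarith [hle, he]
    refine mul_le_mul_of_nonneg_left ?_ hd
    exact_mod_cast Katona.count_le ht htn F hint j
end

section
/- Let H ⊆ [m]^n and let P ⊆ [n] be any subset, and define H(P) = {y ∈ [m]^n : there exists x ∈ H with x <_P y}. Then H(P) is P-complete and H ⊆ H(P). Moreover, if H₁, H₂ ⊆ [m]^n are cross (t₁,...,t_m)-intersecting and t_P = (u₁,...,u_m) is defined by u_i = t_i for i ∈ P and u_i = 0 otherwise, then H₁(P) and H₂(P) are cross t_P-intersecting. -/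
/-- `H(P) = {y ∈ [m]^n : ∃ x ∈ H, x <_P y}`. -/
noncomputable def extFam {m n : ℕ} (P : Finset (Fin m)) (H : Finset (Fin n → Fin m)) :
    Finset (Fin n → Fin m) :=
  letI := Classical.dec
  Finset.univ.filter (fun y => ∃ x ∈ H, relP P x y)

lemma mem_extFam {m n : ℕ} (P : Finset (Fin m)) (H : Finset (Fin n → Fin m))
    (y : Fin n → Fin m) : y ∈ extFam P H ↔ ∃ x ∈ H, relP P x y := by
  simp [extFam]

theorem stmt19 (m n : ℕ) (P : Finset (Fin m)) (t : Fin m → ℕ)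
    (H H₁ H₂ : Finset (Fin n → Fin m))
    (hcross : ∀ x ∈ H₁, ∀ y ∈ H₂, ∀ v : Fin m,
      t v ≤ (Finset.univ.filter (fun i => x i = y i ∧ x i = v)).card) :
    PComplete P (extFam P H) ∧ H ⊆ extFam P H ∧
      (∀ x ∈ extFam P H₁, ∀ y ∈ extFam P H₂, ∀ v : Fin m,
        (if v ∈ P then t v else 0) ≤
          (Finset.univ.filter (fun i => x i = y i ∧ x i = v)).card) := by
  refine ⟨?_, ?_, ?_⟩
  · intro x y hxy hx
    rw [mem_extFam] at hx ⊢
    obtain ⟨z, hz, hzx⟩ := hx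
    refine ⟨z, hz, fun i => ?_⟩
    rcases hzx i with h | h
    · rcases hxy i with h' | h'
      · exact Or.inl (h.trans h')
      · exact Or.inr (h ▸ h')
    · exact Or.inr h
  · intro x hx
    rw [mem_extFam]
    exact ⟨x, hx, fun i => Or.inl rfl⟩
  · intro x hx y hy v
    split_ifs with hv
    · rw [mem_extFam] at hx hy
      obtain ⟨a, ha, hax⟩ := hx
      obtain ⟨b, hb, hby⟩ := hy
      refine (hcross a ha b hb v).trans (Finset.card_le_card ?_)
      intro i hi
      simp only [Finset.mem_filter, Finset.mem_univ, true_and] at hi ⊢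
      obtain ⟨hab, hav⟩ := hi
      have hax' : a i = x i := (hax i).resolve_right (by simp [hav, hv])
      have hby' : b i = y i := (hby i).resolve_right (by simp [← hab, hav, hv])
      exact ⟨hax' ▸ hby' ▸ (hab ▸ rfl), hax' ▸ hav⟩
    · exact Nat.zero_le _
end
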